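/- arXiv:1803.00921 — 12 statements merged into one kernel-verified Lean document; each statement's English description precedes it below -/
import Mathlib

section
/- Define the operator D on functions f : ℂ → ℂ by (D f)(w) = w · f′(w), and define A(·; m) : ℂ → ℂ by A(w; m) = (Dᵐ f)(w) where f(w) = 1/(1 − w − w²). Then for every nonnegative integer m and every w ∈ ℂ with 1 − w − w² ≠ 0, (1 − w − w²) · A(w; m) = δ_{m,0} + w · ∑_{j=0}^{m−1} C(m, j) · (2^{m−j}·w + 1) · A(w; j), where δ is the Kronecker delta and C(m, j) denotes the binomial coefficient. -/
/-- The operator `D` acting on functions `f : ℂ → ℂ` by `(D f)(w) = w * f'(w)`. -/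
noncomputable def Dop (f : ℂ → ℂ) : ℂ → ℂ := fun w => w * deriv f w

/-- `A w m = (Dᵐ f)(w)` where `f w = 1 / (1 - w - w²)`. -/
noncomputable def A (w : ℂ) (m : ℕ) : ℂ :=
  (Dop^[m] (fun z => 1 / (1 - z - z ^ 2))) w

/-!
Near any point where `q w = 1 - w - w²` is nonzero we have `(1 / q) * q = 1`. Since `D` is a
derivation, the Leibniz rule gives `∑ⱼ C(m, j) Dʲ(1 / q) · Dᵐ⁻ʲ q = Dᵐ 1 = δ_{m,0}`. As `D wⁿ = n wⁿ`,
`Dᵏ q = 0ᵏ - w - 2ᵏ w²`, and separating the term `j = m` yields the recurrence.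
-/

open Finset Filter Topology

theorem Filter.EventuallyEq.dop {f g : ℂ → ℂ} {w : ℂ} (h : f =ᶠ[𝓝 w] g) :
    Dop f =ᶠ[𝓝 w] Dop g :=
  h.deriv.mono fun z hz => by simp only [Dop, hz]

theorem Filter.EventuallyEq.iterate_dop {f g : ℂ → ℂ} {w : ℂ} (h : f =ᶠ[𝓝 w] g) (n : ℕ) :
    Dop^[n] f =ᶠ[𝓝 w] Dop^[n] g := by
  induction n with
  | zero => exact h
  | succ n ih => simpa only [Function.iterate_succ_apply'] using ih.dop

theorem AnalyticOnNhd.iterate_dop {f : ℂ → ℂ} {U : Set ℂ} (hf : AnalyticOnNhd ℂ f U) (n : ℕ) :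
    AnalyticOnNhd ℂ (Dop^[n] f) U := by
  induction n with
  | zero => exact hf
  | succ n ih =>
    rw [Function.iterate_succ_apply']
    exact analyticOnNhd_id.mul ih.deriv

theorem iterate_dop_quadratic (a b c : ℂ) (k : ℕ) :
    Dop^[k] (fun w => a + b * w + c * w ^ 2) = fun w => 0 ^ k * a + b * w + 2 ^ k * c * w ^ 2 := by
  induction k with
  | zero => simp
  | succ k ih =>
    rw [Function.iterate_succ_apply', ih]
    funext w
    have h : HasDerivAt (fun w => 0 ^ k * a + b * w + 2 ^ k * c * w ^ 2)
        (b + 2 ^ k * c * (2 * w)) w := by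
      simpa using ((hasDerivAt_id w).const_mul b).const_add (0 ^ k * a) |>.fun_add
        ((hasDerivAt_pow 2 w).const_mul (2 ^ k * c))
    rw [Dop, h.deriv]
    ring

theorem iterate_dop_const (a : ℂ) (k : ℕ) : Dop^[k] (fun _ => a) = fun _ => 0 ^ k * a := by
  simpa using iterate_dop_quadratic a 0 0 k

theorem iterate_dop_mul_apply {f g : ℂ → ℂ} {U : Set ℂ} (hU : IsOpen U)
    (hf : AnalyticOnNhd ℂ f U) (hg : AnalyticOnNhd ℂ g U) (n : ℕ) {w : ℂ} (hw : w ∈ U) :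
    Dop^[n] (f * g) w =
      ∑ ij ∈ antidiagonal n, n.choose ij.1 * (Dop^[ij.1] f w * Dop^[ij.2] g w) := by
  induction n generalizing w with
  | zero => simp
  | succ n ih =>
    have hloc : Dop^[n] (f * g) =ᶠ[𝓝 w]
        fun z => ∑ ij ∈ antidiagonal n, n.choose ij.1 * (Dop^[ij.1] f z * Dop^[ij.2] g z) :=
      eventually_of_mem (hU.mem_nhds hw) fun z hz => ih hz
    have hderiv : HasDerivAt
        (fun z => ∑ ij ∈ antidiagonal n, n.choose ij.1 * (Dop^[ij.1] f z * Dop^[ij.2] g z))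
        (∑ ij ∈ antidiagonal n, n.choose ij.1 *
          (deriv (Dop^[ij.1] f) w * Dop^[ij.2] g w + Dop^[ij.1] f w * deriv (Dop^[ij.2] g) w)) w :=
      HasDerivAt.fun_sum fun ij _ =>
        (((hf.iterate_dop ij.1 w hw).differentiableAt.hasDerivAt).mul
          (hg.iterate_dop ij.2 w hw).differentiableAt.hasDerivAt).const_mul _
    rw [Function.iterate_succ_apply', hloc.dop.eq_of_nhds, Dop, hderiv.deriv,
      sum_antidiagonal_choose_succ_mul (fun i j => Dop^[i] f w * Dop^[j] g w), mul_sum,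
      ← sum_add_distrib]
    refine sum_congr rfl fun ⟨i, j⟩ hij => ?_
    rw [n.choose_symm_of_eq_add (mem_antidiagonal.1 hij).symm]
    simp only [Function.iterate_succ_apply', Dop]
    ring

theorem sum_choose_mul_iterate_dop_one_div_mul {q : ℂ → ℂ} {w : ℂ} (hq : AnalyticAt ℂ q w)
    (hw : q w ≠ 0) (m : ℕ) :
    ∑ j ∈ range (m + 1), m.choose j * (Dop^[j] (fun z => 1 / q z) w * Dop^[m - j] q w) =
      0 ^ m := by
  obtain ⟨U, hU, hUo, hwU⟩ :=
    eventually_nhds_iff.1 (hq.eventually_analyticAt.and (hq.continuousAt.eventually_ne hw))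
  have hprod : (fun z => 1 / q z) * q =ᶠ[𝓝 w] fun _ => 1 :=
    eventually_of_mem (hUo.mem_nhds hwU) fun z hz => one_div_mul_cancel (hU z hz).2
  rw [← Nat.sum_antidiagonal_eq_sum_range_succ
      (fun i j => (m.choose i : ℂ) * (Dop^[i] (fun z => 1 / q z) w * Dop^[j] q w)),
    ← iterate_dop_mul_apply (f := fun z => 1 / q z) hUo
      (fun z hz => analyticAt_const.div (hU z hz).1 (hU z hz).2) (fun z hz => (hU z hz).1) m hwU,
    (hprod.iterate_dop m).eq_of_nhds, iterate_dop_const, mul_one]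

theorem A_recurrence (m : ℕ) (w : ℂ) (hw : 1 - w - w ^ 2 ≠ 0) :
    (1 - w - w ^ 2) * A w m =
      (if m = 0 then 1 else 0) +
        w * ∑ j ∈ Finset.range m,
          (m.choose j : ℂ) * (2 ^ (m - j) * w + 1) * A w j := by
  have hq : (fun z : ℂ => 1 - z - z ^ 2) = fun z => 1 + (-1) * z + (-1) * z ^ 2 := by
    funext z; ring
  have h := sum_choose_mul_iterate_dop_one_div_mul (q := fun z => 1 - z - z ^ 2)
    (by fun_prop) hw m
  beta_reduce at h
  simp only [sum_range_succ, hq, iterate_dop_quadratic, Nat.choose_self, Nat.sub_self,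
    pow_zero, ← A.eq_1] at h
  have hsum : ∑ j ∈ range m, (m.choose j : ℂ) * (A w j *
      (0 ^ (m - j) * 1 + -1 * w + 2 ^ (m - j) * -1 * w ^ 2)) =
      -(w * ∑ j ∈ range m, (m.choose j : ℂ) * (2 ^ (m - j) * w + 1) * A w j) := by
    rw [mul_sum, ← sum_neg_distrib]
    refine sum_congr rfl fun j hj => ?_
    rw [zero_pow (Nat.sub_ne_zero_of_lt (mem_range.1 hj))]
    ring
  rw [← zero_pow_eq]
  linear_combination h - hsum
end

section
/- Let G : ℕ → ℂ satisfy G(i+2) = G(i+1) + G(i) for all i ≥ 0, let k and r be nonnegative integers, and let w ∈ ℂ with 1 − w − w² ≠ 0. With A(w; m) = (Dᵐ f)(w) for f(w) = 1/(1 − w − w²), where (D f)(w) = w·f′(w), one has ∑_{j=0}^{k} w^j · j^r · G(j) = −G(0) · ∑_{m=0}^{r} C(r, m)·(w − δ_{r,m})·A(w; m) + w·G(1) · ∑_{m=0}^{r} C(r, m)·A(w; m) − w^{k+2}·G(k) · ∑_{m=0}^{r} C(r, m)·(k+2)^m·A(w; r−m) − w^{k+1}·G(k+1) · ∑_{m=0}^{r}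 C(r, m)·(k+1)^m·A(w; r−m), where the convention j⁰ = 1 is used for all j including j = 0. -/
open Finset Topology Set

theorem sum_mul_eq_of_fib_recurrence {R : Type*} [CommRing R] (G T c : ℕ → R)
    (hG : ∀ i, G (i + 2) = G (i + 1) + G i) (hT : ∀ n, T n - T (n + 1) - T (n + 2) = c n)
    (k : ℕ) :
    ∑ j ∈ range (k + 1), c j * G j =
      G 0 * T 0 + (G 1 - G 0) * T 1 - G k * T (k + 2) - G (k + 1) * T (k + 1) := by
  induction k with
  | zero => rw [sum_range_one, ← hT]; ring
  | succ k ih => rw [sum_range_succ, ih, ← hT, hG]; ring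

theorem sum_range_choose_succ_mul_pow {R : Type*} [CommSemiring R] (v : R) (x : ℕ → R) (r : ℕ) :
    ∑ m ∈ range (r + 2), ((r + 1).choose m : R) * v ^ m * x (r + 1 - m) =
      v * ∑ m ∈ range (r + 1), (r.choose m : R) * v ^ m * x (r - m) +
        ∑ m ∈ range (r + 1), (r.choose m : R) * v ^ m * x (r - m + 1) := by
  have pascal := sum_choose_succ_mul (fun i j => v ^ i * x j) r
  simp only [← mul_assoc] at pascal
  rw [pascal, add_comm, mul_sum]
  congr 1
  · exact sum_congr rfl fun m _ => by ring
  · exact sum_congr rfl fun m hm => by rw [Nat.sub_add_comm (mem_range_succ_iff.mp hm)]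

theorem sum_range_choose_mul_zero_pow {R : Type*} [CommSemiring R] (x : ℕ → R) (r : ℕ) :
    ∑ m ∈ range (r + 1), (r.choose m : R) * 0 ^ m * x (r - m) = x r := by
  rw [sum_range_succ', sum_eq_zero fun m _ => by simp]
  simp

theorem sum_range_choose_mul_reflect {R : Type*} [CommSemiring R] (x : ℕ → R) (r : ℕ) :
    ∑ m ∈ range (r + 1), (r.choose m : R) * x (r - m) =
      ∑ m ∈ range (r + 1), (r.choose m : R) * x m := by
  rw [← sum_range_reflect]
  refine sum_congr rfl fun m hm => ?_
  have hmr := mem_range_succ_iff.mp hm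
  rw [add_tsub_cancel_right, Nat.choose_symm hmr, Nat.sub_sub_self hmr]

section Dop

variable {s : Set ℂ} {g h : ℂ → ℂ} {w : ℂ}

theorem AnalyticOnNhd.iterate_Dop (hg : AnalyticOnNhd ℂ g s) (r : ℕ) :
    AnalyticOnNhd ℂ (Dop^[r] g) s := by
  induction r with
  | zero => exact hg
  | succ r ih =>
    rw [Function.iterate_succ_apply']
    exact analyticOnNhd_id.mul ih.deriv

theorem Filter.EventuallyEq.Dop_eq (hgh : g =ᶠ[𝓝 w] h) : Dop g w = Dop h w := by
  rw [Dop, Dop, hgh.deriv_eq]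

theorem Dop_add (hg : DifferentiableAt ℂ g w) (hh : DifferentiableAt ℂ h w) :
    Dop (fun z => g z + h z) w = Dop g w + Dop h w := by
  rw [Dop, Dop, Dop, deriv_fun_add hg hh, mul_add]

theorem Dop_mul (hg : DifferentiableAt ℂ g w) (hh : DifferentiableAt ℂ h w) :
    Dop (fun z => g z * h z) w = Dop g w * h w + g w * Dop h w := by
  rw [Dop, Dop, Dop, deriv_fun_mul hg hh]
  ring

theorem Dop_sum {ι : Type*} (t : Finset ι) (c : ι → ℂ) {u : ι → ℂ → ℂ}
    (hu : ∀ i ∈ t, DifferentiableAt ℂ (u i) w) :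
    Dop (fun z => ∑ i ∈ t, c i * u i z) w = ∑ i ∈ t, c i * Dop (u i) w := by
  rw [Dop, deriv_fun_sum fun i hi => (hu i hi).const_mul (c i), mul_sum]
  refine sum_congr rfl fun i hi => ?_
  rw [deriv_const_mul _ (hu i hi), Dop]
  ring

theorem Dop_const_mul_pow (c : ℂ) (n : ℕ) :
    Dop (fun z => c * z ^ n) = fun z => n * c * z ^ n := by
  funext z
  rw [Dop, deriv_const_mul _ (differentiableAt_pow n), deriv_pow_field]
  cases n with
  | zero => simp
  | succ n => rw [Nat.add_sub_cancel, pow_succ]; ring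

theorem iterate_Dop_pow (n r : ℕ) :
    Dop^[r] (fun z : ℂ => z ^ n) = fun z => (n : ℂ) ^ r * z ^ n := by
  induction r with
  | zero => simp
  | succ r ih =>
    rw [Function.iterate_succ_apply', ih, Dop_const_mul_pow]
    funext z
    ring

theorem Set.EqOn.iterate_Dop (hs : IsOpen s) (hgh : EqOn g h s) (r : ℕ) :
    EqOn (Dop^[r] g) (Dop^[r] h) s := by
  induction r with
  | zero => exact hgh
  | succ r ih =>
    intro z hz
    simp only [Function.iterate_succ_apply']
    exact (ih.eventuallyEq_of_mem (hs.mem_nhds hz)).Dop_eq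

theorem iterate_Dop_add (hs : IsOpen s) (hg : AnalyticOnNhd ℂ g s) (hh : AnalyticOnNhd ℂ h s)
    (r : ℕ) : EqOn (Dop^[r] fun z => g z + h z) (fun z => Dop^[r] g z + Dop^[r] h z) s := by
  induction r with
  | zero => exact fun _ _ => rfl
  | succ r ih =>
    intro z hz
    simp only [Function.iterate_succ_apply']
    rw [(ih.eventuallyEq_of_mem (hs.mem_nhds hz)).Dop_eq,
      Dop_add ((hg.iterate_Dop r z hz).differentiableAt) ((hh.iterate_Dop r z hz).differentiableAt)]

theorem iterate_Dop_pow_mul (hs : IsOpen s) (hg : AnalyticOnNhd ℂ g s) (n r : ℕ) :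
    EqOn (Dop^[r] fun z => z ^ n * g z)
      (fun z => z ^ n * ∑ m ∈ range (r + 1), (r.choose m : ℂ) * (n : ℂ) ^ m * Dop^[r - m] g z)
      s := by
  induction r with
  | zero => intro z _; simp
  | succ r ih =>
    intro z hz
    have hdiff : ∀ j, DifferentiableAt ℂ (Dop^[j] g) z :=
      fun j => (hg.iterate_Dop j z hz).differentiableAt
    have hpow : Dop (fun z : ℂ => z ^ n) z = n * z ^ n := by
      simpa using congrFun (iterate_Dop_pow n 1) z
    rw [Function.iterate_succ_apply', (ih.eventuallyEq_of_mem (hs.mem_nhds hz)).Dop_eq,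
      Dop_mul (differentiableAt_pow n) (DifferentiableAt.fun_sum fun m _ => (hdiff _).const_mul _),
      Dop_sum _ _ fun m _ => hdiff _, hpow]
    dsimp only
    rw [sum_range_choose_succ_mul_pow (n : ℂ) (fun j => Dop^[j] g z)]
    simp only [Function.iterate_succ_apply']
    ring

end Dop

section FibonacciGeneratingFunction

variable {w : ℂ}

theorem isOpen_setOf_one_sub_sub_sq_ne_zero : IsOpen {z : ℂ | 1 - z - z ^ 2 ≠ 0} :=
  isOpen_ne_fun (by fun_prop) continuous_const

theorem analyticOnNhd_one_div_one_sub_sub_sq :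
    AnalyticOnNhd ℂ (fun z : ℂ => 1 / (1 - z - z ^ 2)) {z | 1 - z - z ^ 2 ≠ 0} :=
  analyticOnNhd_const.div ((analyticOnNhd_const.sub analyticOnNhd_id).sub (analyticOnNhd_id.pow 2))
    fun _ hz => hz

theorem iterate_Dop_pow_mul_one_div (hw : 1 - w - w ^ 2 ≠ 0) (r n : ℕ) :
    (Dop^[r] fun z => z ^ n * (1 / (1 - z - z ^ 2))) w =
      w ^ n * ∑ m ∈ range (r + 1), (r.choose m : ℂ) * (n : ℂ) ^ m * A w (r - m) :=
  iterate_Dop_pow_mul isOpen_setOf_one_sub_sub_sq_ne_zero analyticOnNhd_one_div_one_sub_sub_sq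
    n r hw

theorem iterate_Dop_pow_mul_one_div_recurrence (hw : 1 - w - w ^ 2 ≠ 0) (r n : ℕ) :
    (Dop^[r] fun z => z ^ n * (1 / (1 - z - z ^ 2))) w
      - (Dop^[r] fun z => z ^ (n + 1) * (1 / (1 - z - z ^ 2))) w
      - (Dop^[r] fun z => z ^ (n + 2) * (1 / (1 - z - z ^ 2))) w = w ^ n * (n : ℂ) ^ r := by
  set U := {z : ℂ | 1 - z - z ^ 2 ≠ 0}
  have hU : IsOpen U := isOpen_setOf_one_sub_sub_sq_ne_zero
  have hmul (j : ℕ) : AnalyticOnNhd ℂ (fun z => z ^ j * (1 / (1 - z - z ^ 2))) U :=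
    (analyticOnNhd_id.pow j).mul analyticOnNhd_one_div_one_sub_sub_sq
  have hsplit : EqOn (fun z => z ^ n * (1 / (1 - z - z ^ 2)))
      (fun z => z ^ n + (z ^ (n + 1) * (1 / (1 - z - z ^ 2)) + z ^ (n + 2) * (1 / (1 - z - z ^ 2))))
      U := by
    intro z (hz : 1 - z - z ^ 2 ≠ 0)
    field_simp
    ring
  have hpow : AnalyticOnNhd ℂ (fun z : ℂ => z ^ n) U := analyticOnNhd_id.pow n
  have htail : AnalyticOnNhd ℂ
      (fun z => z ^ (n + 1) * (1 / (1 - z - z ^ 2)) + z ^ (n + 2) * (1 / (1 - z - z ^ 2))) U :=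
    (hmul _).add (hmul _)
  simp only [hsplit.iterate_Dop hU r hw, iterate_Dop_add hU hpow htail r hw,
    iterate_Dop_add hU (hmul _) (hmul _) r hw, iterate_Dop_pow]
  ring

end FibonacciGeneratingFunction

theorem weighted_sum_formula (G : ℕ → ℂ) (hG : ∀ i, G (i + 2) = G (i + 1) + G i)
    (k r : ℕ) (w : ℂ) (hw : 1 - w - w ^ 2 ≠ 0) :
    ∑ j ∈ Finset.range (k + 1), w ^ j * (j : ℂ) ^ r * G j =
      -G 0 * ∑ m ∈ Finset.range (r + 1),
          (r.choose m : ℂ) * (w - if r = m then 1 else 0) * A w m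
      + w * G 1 * ∑ m ∈ Finset.range (r + 1), (r.choose m : ℂ) * A w m
      - w ^ (k + 2) * G k * ∑ m ∈ Finset.range (r + 1),
          (r.choose m : ℂ) * ((k : ℂ) + 2) ^ m * A w (r - m)
      - w ^ (k + 1) * G (k + 1) * ∑ m ∈ Finset.range (r + 1),
          (r.choose m : ℂ) * ((k : ℂ) + 1) ^ m * A w (r - m) := by
  have hsum := sum_mul_eq_of_fib_recurrence G
    (fun n => (Dop^[r] fun z => z ^ n * (1 / (1 - z - z ^ 2))) w) (fun j => w ^ j * (j : ℂ) ^ r)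
    hG (iterate_Dop_pow_mul_one_div_recurrence hw r) k
  simp only [iterate_Dop_pow_mul_one_div hw] at hsum
  simp only [Nat.cast_zero, Nat.cast_one, one_pow, mul_one, pow_zero, one_mul, pow_one,
    sum_range_choose_mul_zero_pow (A w), sum_range_choose_mul_reflect (A w)] at hsum
  have hdelta : ∑ m ∈ range (r + 1), (r.choose m : ℂ) * (w - if r = m then 1 else 0) * A w m =
      w * ∑ m ∈ range (r + 1), (r.choose m : ℂ) * A w m - A w r := by
    simp [mul_sub, sum_sub_distrib, mul_sum, mul_left_comm, mul_comm]
  rw [hsum, hdelta]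
  push_cast
  ring
end

section
/- Let G : ℕ → ℂ satisfy G(i+2) = G(i+1) + G(i) for all i ≥ 0, let k be a nonnegative integer, and let w ∈ ℂ with 1 − w − w² ≠ 0. Then ∑_{j=0}^{k} w^j · j · G(j) = ((2 − w)·w²·G(0) + (w² + 1)·w·G(1)) / (1 − w − w²)² + ((k·w² + (k+1)·w − (k+2))·w^{k+2}·G(k)) / (1 − w − w²)² + (((k−1)·w² + k·w − (k+1))·w^{k+1}·G(k+1)) / (1 − w − w²)². -/
theorem sq_mul_sum_range_pow_mul_mul_of_fib_rec {R : Type*} [CommRing R] (G : ℕ → R)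
    (hG : ∀ i, G (i + 2) = G (i + 1) + G i) (w : R) (k : ℕ) :
    (1 - w - w ^ 2) ^ 2 * ∑ j ∈ Finset.range (k + 1), w ^ j * (j : R) * G j =
      (2 - w) * w ^ 2 * G 0 + (w ^ 2 + 1) * w * G 1
      + ((k : R) * w ^ 2 + ((k : R) + 1) * w - ((k : R) + 2)) * w ^ (k + 2) * G k
      + (((k : R) - 1) * w ^ 2 + (k : R) * w - ((k : R) + 1)) * w ^ (k + 1) * G (k + 1) := by
  induction k with
  | zero => simp only [zero_add, Finset.sum_range_one, Nat.cast_zero]; ring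
  | succ n ih =>
    rw [Finset.sum_range_succ, mul_add, ih]
    push_cast
    -- the closed form at `n + 1` mentions `G (n + 2)`, which the recurrence eliminates
    linear_combination (-(n : R) * w ^ 2 - (n + 1) * w + (n + 2)) * w ^ (n + 2) * hG n

theorem weighted_linear_sum (G : ℕ → ℂ) (hG : ∀ i, G (i + 2) = G (i + 1) + G i)
    (k : ℕ) (w : ℂ) (hw : 1 - w - w ^ 2 ≠ 0) :
    ∑ j ∈ Finset.range (k + 1), w ^ j * (j : ℂ) * G j =
      ((2 - w) * w ^ 2 * G 0 + (w ^ 2 + 1) * w * G 1) / (1 - w - w ^ 2) ^ 2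
      + (((k : ℂ) * w ^ 2 + ((k : ℂ) + 1) * w - ((k : ℂ) + 2)) * w ^ (k + 2) * G k) /
          (1 - w - w ^ 2) ^ 2
      + ((((k : ℂ) - 1) * w ^ 2 + (k : ℂ) * w - ((k : ℂ) + 1)) * w ^ (k + 1) * G (k + 1)) /
          (1 - w - w ^ 2) ^ 2 := by
  rw [← add_div, ← add_div, eq_div_iff (pow_ne_zero 2 hw), mul_comm]
  exact sq_mul_sum_range_pow_mul_mul_of_fib_rec G hG w k
end

section
/- Let G : ℕ → ℂ satisfy G(i+2) = G(i+1) + G(i) for all i ≥ 0, let r be a nonnegative integer, and let w ∈ ℂ with 1 − w − w² ≠ 0. Assume that for every nonnegative integer m ≤ r, k^m · w^k · G(k) → 0 as k → ∞. Then the series ∑_{j=0}^{∞} w^j · j^r · G(j) converges and equals −G(0) · ∑_{m=0}^{r} C(r, m)·(w − δ_{r,m})·A(w; m) + w·G(1) · ∑_{m=0}^{r} C(r, m)·A(w; m), where A(w; m) = (Dᵐ f)(w) for f(w) = 1/(1 − w − w²) and (D f)(w) = w·f′(w). -/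
/-!
Write `L m = ∑ⱼ w^j j^m G j` and `c n = (Dⁿ q)(w)` for the denominator `q z = 1 - z - z²`.
Both `L` and `m ↦ A(w; m)` solve binomial convolution equations `∑ₖ C(m,k) X k c (m-k) = Y m`
with the same kernel `c`: for `A` (with `Y m = 0^m`) this is the Leibniz rule applied to
`Dᵐ (q · 1/q) = Dᵐ 1`, for `L` (with `Y m = 0^m G 0 + w (G 1 - G 0)`) it is the Fibonacci
recurrence after shifting the summation index. Exponential generating functions turn binomial
convolution into multiplication of power series, and `c 0 = q w ≠ 0`, so these equations force
`L m = G 0 A(w; m) + w (G 1 - G 0) ∑ₖ C(m,k) A(w; k)`.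

Summability of the `L m` comes from Binet's formula: `w^k G k = a x^k + b y^k` with `x ≠ y`,
and if this tends to `0` then so does each term, which is then zero or geometric with ratio of
norm `< 1`.
-/

open Finset Filter Topology PowerSeries Nat

section BinomialConvolution

variable {R : Type*} [CommSemiring R]

def binomConv (a b : ℕ → R) (n : ℕ) : R :=
  ∑ k ∈ range (n + 1), (n.choose k : R) * a k * b (n - k)

theorem binomConv_pow_pow (x y : R) (n : ℕ) :
    binomConv (x ^ ·) (y ^ ·) n = (x + y) ^ n := by
  rw [add_pow, binomConv]
  exact sum_congr rfl fun k _ => by ring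

end BinomialConvolution

section ExponentialGeneratingFunction

variable {K : Type*} [Field K]

def egf : (ℕ → K) →ₗ[K] K⟦X⟧ where
  toFun a := mk fun n => a n / (n ! : K)
  map_add' a b := by ext; simp [add_div]
  map_smul' c a := by ext; simp [mul_div_assoc]

@[simp]
theorem coeff_egf (a : ℕ → K) (n : ℕ) : coeff n (egf a) = a n / (n ! : K) := by
  simp [egf]

variable [CharZero K]

theorem egf_injective : Function.Injective (egf : (ℕ → K) → K⟦X⟧) := fun a b h =>
  funext fun n => by
    simpa [n.factorial_ne_zero] using congrArg (coeff n) h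

theorem egf_binomConv (a b : ℕ → K) : egf (binomConv a b) = egf a * egf b := by
  ext n
  rw [coeff_mul, Finset.Nat.sum_antidiagonal_eq_sum_range_succ
    (fun i j => coeff i (egf a) * coeff j (egf b)), coeff_egf, binomConv, sum_div]
  refine sum_congr rfl fun k hk => ?_
  rw [Nat.cast_choose K (Nat.lt_succ_iff.mp (mem_range.mp hk))]
  simp only [coeff_egf]
  have : (n ! : K) ≠ 0 := by exact_mod_cast n.factorial_ne_zero
  field_simp

theorem egf_zero_pow : egf (fun n => (0 : K) ^ n) = 1 := by
  ext n
  rcases n with _ | n <;> simp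

end ExponentialGeneratingFunction

theorem iterate_Dop_succ_apply (f : ℂ → ℂ) (n : ℕ) (z : ℂ) :
    Dop^[n + 1] f z = z * deriv (Dop^[n] f) z := by
  rw [Function.iterate_succ_apply', Dop]

theorem AnalyticAt.iterate_Dop {f : ℂ → ℂ} {z : ℂ} (hf : AnalyticAt ℂ f z) (n : ℕ) :
    AnalyticAt ℂ (Dop^[n] f) z := by
  induction n with
  | zero => exact hf
  | succ n ih =>
    rw [Function.iterate_succ']
    exact analyticAt_id.mul ih.deriv

theorem Filter.EventuallyEq.iterate_Dop {f g : ℂ → ℂ} {z : ℂ} (h : f =ᶠ[𝓝 z] g) (n : ℕ) :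
    Dop^[n] f =ᶠ[𝓝 z] Dop^[n] g := by
  induction n with
  | zero => exact h
  | succ n ih =>
    filter_upwards [ih.deriv] with y hy
    rw [iterate_Dop_succ_apply, iterate_Dop_succ_apply, hy]

theorem iterate_Dop_const_one (n : ℕ) : Dop^[n] (fun _ => (1 : ℂ)) = fun _ => 0 ^ n := by
  induction n with
  | zero => rfl
  | succ n ih =>
    funext z
    rw [iterate_Dop_succ_apply, ih, deriv_const, mul_zero, zero_pow n.succ_ne_zero]

theorem iterate_Dop_denom (n : ℕ) :
    Dop^[n] (fun z => 1 - z - z ^ 2) = fun z => 0 ^ n - z - 2 ^ n * z ^ 2 := by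
  induction n with
  | zero => simp
  | succ n ih =>
    funext z
    have hderiv :
        HasDerivAt (fun y : ℂ => 0 ^ n - y - 2 ^ n * y ^ 2) (-1 - 2 ^ n * (2 * z)) z := by
      simpa using ((hasDerivAt_id' z).const_sub _).fun_sub ((hasDerivAt_pow 2 z).const_mul _)
    rw [iterate_Dop_succ_apply, ih, hderiv.deriv, zero_pow n.succ_ne_zero]
    ring

theorem iterate_Dop_mul {f g : ℂ → ℂ} {z : ℂ} (hf : AnalyticAt ℂ f z) (hg : AnalyticAt ℂ g z)
    (n : ℕ) : Dop^[n] (fun y => f y * g y) z =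
      binomConv (fun k => Dop^[k] f z) (fun k => Dop^[k] g z) n := by
  induction n generalizing z with
  | zero => simp [binomConv]
  | succ n ih =>
    have hev : Dop^[n] (fun y => f y * g y) =ᶠ[𝓝 z]
        fun y => binomConv (fun k => Dop^[k] f y) (fun k => Dop^[k] g y) n := by
      filter_upwards [hf.eventually_analyticAt, hg.eventually_analyticAt] with y hfy hgy
      exact ih hfy hgy
    have hderiv : HasDerivAt (fun y => binomConv (fun k => Dop^[k] f y) (fun k => Dop^[k] g y) n)
        (∑ k ∈ range (n + 1), (n.choose k : ℂ) * (deriv (Dop^[k] f) z * Dop^[n - k] g z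
          + Dop^[k] f z * deriv (Dop^[n - k] g) z)) z := by
      refine HasDerivAt.fun_sum fun k _ => ?_
      simp_rw [mul_assoc]
      exact (((hf.iterate_Dop k).differentiableAt.hasDerivAt).mul
        (hg.iterate_Dop (n - k)).differentiableAt.hasDerivAt).const_mul _
    rw [iterate_Dop_succ_apply, hev.deriv_eq, hderiv.deriv, binomConv]
    simp_rw [mul_assoc]
    rw [sum_choose_succ_mul (fun i j => Dop^[i] f z * Dop^[j] g z), mul_sum, ← sum_add_distrib]
    refine sum_congr rfl fun k hk => ?_
    have hkn : n + 1 - k = n - k + 1 := by have := mem_range.mp hk; omega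
    rw [hkn, iterate_Dop_succ_apply, iterate_Dop_succ_apply]
    ring

noncomputable def denomDop (w : ℂ) (n : ℕ) : ℂ :=
  Dop^[n] (fun z => 1 - z - z ^ 2) w

theorem binomConv_A_denomDop {w : ℂ} (hw : 1 - w - w ^ 2 ≠ 0) :
    binomConv (A w) (denomDop w) = fun n => 0 ^ n := by
  funext n
  have hq : AnalyticAt ℂ (fun z : ℂ => 1 - z - z ^ 2) w := by fun_prop
  have hf : AnalyticAt ℂ (fun z : ℂ => 1 / (1 - z - z ^ 2)) w := analyticAt_const.div hq hw
  have hone : (fun z : ℂ => 1 / (1 - z - z ^ 2) * (1 - z - z ^ 2)) =ᶠ[𝓝 w] fun _ => 1 := by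
    filter_upwards [hq.continuousAt.eventually_ne hw] with z hz
    exact one_div_mul_cancel hz
  calc binomConv (A w) (denomDop w) n
      = Dop^[n] (fun z : ℂ => 1 / (1 - z - z ^ 2) * (1 - z - z ^ 2)) w := by
        rw [iterate_Dop_mul hf hq]; rfl
    _ = 0 ^ n := by rw [(hone.iterate_Dop n).eq_of_nhds, iterate_Dop_const_one]

theorem tsum_mul_sub_shift_eq {R : Type*} [CommRing R] [TopologicalSpace R] [IsTopologicalRing R]
    [T2Space R] {G : ℕ → R} (hG : ∀ i, G (i + 2) = G (i + 1) + G i) {u : ℕ → R}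
    (h₀ : Summable fun j => u j * G j) (h₁ : Summable fun j => u (j + 1) * G j)
    (h₂ : Summable fun j => u (j + 2) * G j) :
    ∑' j, (u j - u (j + 1) - u (j + 2)) * G j = u 0 * G 0 + u 1 * (G 1 - G 0) := by
  have e₀ := h₀.sum_add_tsum_nat_add 2
  have e₁ := h₁.sum_add_tsum_nat_add 1
  have e₂ : ∑' j, u (j + 2) * G (j + 2)
      = ∑' j, u (j + 1 + 1) * G (j + 1) + ∑' j, u (j + 2) * G j := by
    simp_rw [hG, mul_add]
    exact ((summable_nat_add_iff 1).mpr h₁).tsum_add h₂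
  simp only [sub_mul]
  rw [(h₀.sub h₁).tsum_sub h₂, h₀.tsum_sub h₁]
  simp only [sum_range_succ, sum_range_zero] at e₀ e₁
  linear_combination e₂ - e₀ + e₁

theorem binomConv_tsum_denomDop {G : ℕ → ℂ} (hG : ∀ i, G (i + 2) = G (i + 1) + G i) {w : ℂ}
    (hs : ∀ m, Summable fun j : ℕ => w ^ j * (j : ℂ) ^ m * G j) (m : ℕ) :
    binomConv (fun k => ∑' j : ℕ, w ^ j * (j : ℂ) ^ k * G j) (denomDop w) m
      = 0 ^ m * G 0 + w * (G 1 - G 0) := by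
  have hexpand : ∀ (s : ℂ) (j : ℕ), (j + s) ^ m * (w ^ j * G j)
      = ∑ k ∈ range (m + 1), (m.choose k * s ^ (m - k)) * (w ^ j * (j : ℂ) ^ k * G j) := by
    intro s j
    rw [← binomConv_pow_pow, binomConv, sum_mul]
    exact sum_congr rfl fun k _ => by ring
  have hsummable : ∀ s : ℂ, Summable fun j : ℕ => (j + s) ^ m * (w ^ j * G j) := fun s => by
    simp_rw [hexpand s]
    exact summable_sum fun k _ => (hs k).mul_left _
  have hpoint : ∀ j : ℕ, binomConv (fun k => w ^ j * (j : ℂ) ^ k * G j) (denomDop w) m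
      = (w ^ j * (j : ℂ) ^ m - w ^ (j + 1) * ((j + 1 : ℕ) : ℂ) ^ m
          - w ^ (j + 2) * ((j + 2 : ℕ) : ℂ) ^ m) * G j := fun j => by
    have e : (w ^ j * (j : ℂ) ^ m - w ^ (j + 1) * ((j + 1 : ℕ) : ℂ) ^ m
          - w ^ (j + 2) * ((j + 2 : ℕ) : ℂ) ^ m) * G j
        = (j + 0) ^ m * (w ^ j * G j) - w * ((j + 1) ^ m * (w ^ j * G j))
          - w ^ 2 * ((j + 2) ^ m * (w ^ j * G j)) := by
      push_cast; ring
    rw [e, hexpand 0, hexpand 1, hexpand 2, mul_sum, mul_sum, ← sum_sub_distrib,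
      ← sum_sub_distrib, binomConv]
    refine sum_congr rfl fun k _ => ?_
    rw [denomDop, iterate_Dop_denom]
    ring
  calc binomConv (fun k => ∑' j : ℕ, w ^ j * (j : ℂ) ^ k * G j) (denomDop w) m
      = ∑' j : ℕ, binomConv (fun k => w ^ j * (j : ℂ) ^ k * G j) (denomDop w) m := by
        simp_rw [binomConv, ← tsum_mul_left, ← tsum_mul_right]
        exact (Summable.tsum_finsetSum fun k _ => ((hs k).mul_left _).mul_right _).symm
    _ = ∑' j : ℕ, (w ^ j * (j : ℂ) ^ m - w ^ (j + 1) * ((j + 1 : ℕ) : ℂ) ^ m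
          - w ^ (j + 2) * ((j + 2 : ℕ) : ℂ) ^ m) * G j := tsum_congr hpoint
    _ = 0 ^ m * G 0 + w * (G 1 - G 0) := by
        rw [tsum_mul_sub_shift_eq hG (u := fun j : ℕ => w ^ j * (j : ℂ) ^ m) (hs m)]
        · simp
        · exact ((hsummable 1).mul_left w).congr fun j => by push_cast; ring
        · exact ((hsummable 2).mul_left (w ^ 2)).congr fun j => by push_cast; ring

theorem exists_eq_mul_pow_add_mul_pow {K : Type*} [Field K] {G : ℕ → K}
    (hG : ∀ i, G (i + 2) = G (i + 1) + G i) {x y : K} (hx : x ^ 2 = x + 1) (hy : y ^ 2 = y + 1)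
    (hxy : x ≠ y) : ∃ a b : K, ∀ n, G n = a * x ^ n + b * y ^ n := by
  have hxy' : x - y ≠ 0 := sub_ne_zero.mpr hxy
  refine ⟨(G 1 - y * G 0) / (x - y), (x * G 0 - G 1) / (x - y), fun n => ?_⟩
  induction n using Nat.twoStepInduction with
  | zero => field_simp; ring
  | one => field_simp; ring
  | more n ih₀ ih₁ =>
    rw [hG, ih₀, ih₁]
    linear_combination (-(G 1 - y * G 0) / (x - y) * x ^ n) * hx
      - (x * G 0 - G 1) / (x - y) * y ^ n * hy

theorem tendsto_mul_pow_of_tendsto_add {K : Type*} [Field K] [TopologicalSpace K]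
    [IsTopologicalRing K] {a b x y : K} (hxy : x ≠ y)
    (h : Tendsto (fun n : ℕ => a * x ^ n + b * y ^ n) atTop (𝓝 0)) :
    Tendsto (fun n : ℕ => a * x ^ n) atTop (𝓝 0) := by
  have hxy' : x - y ≠ 0 := sub_ne_zero.mpr hxy
  have h' := ((h.comp (tendsto_add_atTop_nat 1)).sub (h.const_mul y)).const_mul (x - y)⁻¹
  rw [mul_zero, sub_zero, mul_zero] at h'
  refine h'.congr fun n => ?_
  field_simp
  simp only [Function.comp_apply]
  ring

theorem summable_pow_mul_of_tendsto_mul_pow {K : Type*} [NormedField K] [CompleteSpace K]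
    {a x : K} (h : Tendsto (fun n : ℕ => a * x ^ n) atTop (𝓝 0)) (m : ℕ) :
    Summable fun n : ℕ => (n : K) ^ m * (a * x ^ n) := by
  rcases eq_or_ne a 0 with rfl | ha
  · simp
  have hx : ‖x‖ < 1 := tendsto_pow_atTop_nhds_zero_iff_norm_lt_one.mp <| by
    simpa [ha] using h.const_mul a⁻¹
  simpa [mul_left_comm] using (summable_pow_mul_geometric_of_norm_lt_one m hx).mul_left a

theorem summable_weighted_of_tendsto {G : ℕ → ℂ} (hG : ∀ i, G (i + 2) = G (i + 1) + G i)
    {w : ℂ} (h : Tendsto (fun n : ℕ => w ^ n * G n) atTop (𝓝 0)) (m : ℕ) :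
    Summable fun j : ℕ => w ^ j * (j : ℂ) ^ m * G j := by
  rcases eq_or_ne w 0 with rfl | hw
  · exact (hasSum_single 0 fun j hj => by simp [zero_pow hj]).summable
  have hφψ : (Real.goldenRatio : ℂ) ≠ Real.goldenConj := by
    exact_mod_cast (Real.goldenConj_neg.trans Real.goldenRatio_pos).ne'
  obtain ⟨a, b, hab⟩ := exists_eq_mul_pow_add_mul_pow hG
    (by exact_mod_cast Real.goldenRatio_sq) (by exact_mod_cast Real.goldenConj_sq) hφψ
  have hsplit : ∀ n,
      w ^ n * G n = a * (w * Real.goldenRatio) ^ n + b * (w * Real.goldenConj) ^ n := fun n => by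
    rw [hab, mul_pow, mul_pow]
    ring
  have hne : w * Real.goldenRatio ≠ w * Real.goldenConj := (mul_right_injective₀ hw).ne hφψ
  simp_rw [hsplit] at h
  have ha := tendsto_mul_pow_of_tendsto_add hne h
  have hb := tendsto_mul_pow_of_tendsto_add hne.symm (by simpa only [add_comm] using h)
  refine ((summable_pow_mul_of_tendsto_mul_pow ha m).add
    (summable_pow_mul_of_tendsto_mul_pow hb m)).congr fun j => ?_
  rw [mul_right_comm, hsplit]
  ring

theorem tsum_weighted_eq {G : ℕ → ℂ} (hG : ∀ i, G (i + 2) = G (i + 1) + G i) {w : ℂ}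
    (hw : 1 - w - w ^ 2 ≠ 0) (hs : ∀ m, Summable fun j : ℕ => w ^ j * (j : ℂ) ^ m * G j) :
    (fun m => ∑' j : ℕ, w ^ j * (j : ℂ) ^ m * G j)
      = G 0 • A w + (w * (G 1 - G 0)) • binomConv (A w) 1 := by
  have hdenom : egf (denomDop w) ≠ 0 := fun h => hw <| by
    simpa [denomDop] using congrArg (coeff 0) h
  refine egf_injective (mul_right_cancel₀ hdenom ?_)
  have hrhs : (fun m => 0 ^ m * G 0 + w * (G 1 - G 0))
      = G 0 • (fun m => (0 : ℂ) ^ m) + (w * (G 1 - G 0)) • 1 := by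
    funext m; simp [mul_comm]
  rw [← egf_binomConv, funext (binomConv_tsum_denomDop hG hs), hrhs]
  simp only [map_add, map_smul, egf_zero_pow, egf_binomConv, add_mul, smul_mul_assoc]
  rw [mul_right_comm (egf (A w)), ← egf_binomConv (A w), binomConv_A_denomDop hw, egf_zero_pow,
    one_mul]

theorem weighted_sum_infinite (G : ℕ → ℂ) (hG : ∀ i, G (i + 2) = G (i + 1) + G i)
    (r : ℕ) (w : ℂ) (hw : 1 - w - w ^ 2 ≠ 0)
    (hlim : ∀ m ≤ r, Filter.Tendsto (fun k : ℕ => (k : ℂ) ^ m * w ^ k * G k)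
      Filter.atTop (nhds 0)) :
    HasSum (fun j : ℕ => w ^ j * (j : ℂ) ^ r * G j)
      (-G 0 * ∑ m ∈ Finset.range (r + 1),
          (r.choose m : ℂ) * (w - if r = m then 1 else 0) * A w m
        + w * G 1 * ∑ m ∈ Finset.range (r + 1), (r.choose m : ℂ) * A w m) := by
  have hs := summable_weighted_of_tendsto hG (by simpa using hlim 0 r.zero_le)
  convert (hs r).hasSum using 1
  have hδ : ∑ m ∈ range (r + 1), (r.choose m : ℂ) * (w - if r = m then 1 else 0) * A w m
      = w * ∑ m ∈ range (r + 1), (r.choose m : ℂ) * A w m - A w r := by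
    simp only [mul_sub, sub_mul, sum_sub_distrib, mul_sum, mul_ite, ite_mul, mul_one, mul_zero,
      zero_mul, sum_ite_eq, mem_range, lt_add_one, if_true, choose_self, cast_one, one_mul]
    congr 1
    exact sum_congr rfl fun m _ => by ring
  rw [congrFun (tsum_weighted_eq hG hw hs) r, hδ]
  simp only [Pi.add_apply, Pi.smul_apply, smul_eq_mul, binomConv, Pi.one_apply, mul_one]
  ring
end

section
/- Let G : ℕ → ℂ satisfy G(i+2) = G(i+1) + G(i) for all i ≥ 0, and define A : ℕ → ℚ recursively by A(m) = −δ_{m,0} − ∑_{j=0}^{m−1} C(m, j)·(2^{m−j} + 1)·A(j). Then for all nonnegative integers k and r, ∑_{j=0}^{k} j^r · G(j) = −G(0) · ∑_{m=0}^{r} C(r, m)·(1 − δ_{r,m})·A(m) + G(1) · ∑_{m=0}^{r} C(r, m)·A(m) − G(k) · ∑_{m=0}^{r} C(r, m)·(k+2)^m·A(r−m) − G(k+1) · ∑_{m=0}^{r} C(r, m)·(k+1)^m·A(r−m), with the convention 0⁰ = 1. -/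
/-!
Let `P r x = ∑ m ≤ r, C(r, m) A(m) x^(r-m)` be the Appell polynomials of the sequence `A`; the
sums in the theorem are `P r 1`, `P r (k + 2)` and `P r (k + 1)`. The recurrence defining `A` says
exactly that `P s 2 + P s 1 = P s 0 - δ_{s,0}`, and the Appell addition formula
`P r (x + y) = ∑ j, C(r, j) x^j P (r - j) y` upgrades this to `P r (x + 2) + P r (x + 1) = P r x - x^r`.
Against the Fibonacci recurrence this makes `T k = G k · P r (k + 2) + G (k + 1) · P r (k + 1)`
satisfy `T k - T (k + 1) = (k + 1)^r G (k + 1)`, so the sum telescopes.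
-/

open Finset

theorem Nat.choose_mul_choose_sub_comm (r m j : ℕ) :
    r.choose m * (r - m).choose j = r.choose j * (r - j).choose m := by
  rcases le_or_gt (m + j) r with h | h
  · rw [← Nat.choose_symm (by omega : m ≤ r), Nat.choose_mul (by omega : j ≤ r - m),
      Nat.choose_symm_of_eq_add (by omega : r - j = r - m - j + m)]
  · have hz : ∀ a b, r < a + b → r.choose a * (r - a).choose b = 0 := fun a b h => by
      simp only [Nat.mul_eq_zero, Nat.choose_eq_zero_iff]; omega
    rw [hz m j h, hz j m (by omega)]

theorem Finset.sum_range_succ_mul_eq_of_fib_rec {R : Type*} [CommRing R] {G p w : ℕ → R}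
    (hG : ∀ i, G (i + 2) = G (i + 1) + G i) (hp : ∀ i, p (i + 2) + p (i + 1) = p i - w i)
    (k : ℕ) :
    ∑ j ∈ range (k + 1), w j * G j =
      (w 0 + p 2) * G 0 + p 1 * G 1 - G k * p (k + 2) - G (k + 1) * p (k + 1) := by
  induction k with
  | zero => rw [sum_range_one]; ring
  | succ k ih =>
    rw [sum_range_succ, ih, hG k]
    linear_combination G (k + 1) * hp (k + 1)

section Appell

variable {R : Type*} [CommSemiring R]

theorem sum_range_choose_mul_eq_of_le (f : ℕ → R) {n N : ℕ} (h : n ≤ N) :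
    ∑ j ∈ range (n + 1), (n.choose j : R) * f j = ∑ j ∈ range (N + 1), (n.choose j : R) * f j :=
  sum_subset (range_subset_range.mpr (by omega)) fun j _ hj => by
    rw [Nat.choose_eq_zero_of_lt (by simp at hj; omega), Nat.cast_zero, zero_mul]

theorem add_pow_eq_sum_range_of_le (x y : R) {n N : ℕ} (h : n ≤ N) :
    (x + y) ^ n = ∑ j ∈ range (N + 1), (n.choose j : R) * x ^ j * y ^ (n - j) := by
  simp only [add_pow, mul_assoc]
  rw [← sum_range_choose_mul_eq_of_le _ h]
  exact sum_congr rfl fun j _ => by ring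

variable (a : ℕ → R)

def appellSeq (r : ℕ) (x : R) : R :=
  ∑ m ∈ range (r + 1), (r.choose m : R) * (x ^ (r - m) * a m)

theorem appellSeq_eq_sum_pow_mul_sub (r : ℕ) (x : R) :
    appellSeq a r x = ∑ m ∈ range (r + 1), (r.choose m : R) * x ^ m * a (r - m) := by
  rw [appellSeq, ← sum_range_reflect]
  refine sum_congr rfl fun m hm => ?_
  have hm : m ≤ r := Nat.lt_succ_iff.mp (mem_range.mp hm)
  rw [Nat.add_sub_cancel, Nat.choose_symm hm, Nat.sub_sub_self hm, mul_assoc]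

theorem appellSeq_one (r : ℕ) :
    appellSeq a r 1 = ∑ m ∈ range (r + 1), (r.choose m : R) * a m := by
  simp only [appellSeq, one_pow, one_mul]

theorem appellSeq_add (r : ℕ) (x y : R) :
    appellSeq a r (x + y) =
      ∑ j ∈ range (r + 1), (r.choose j : R) * x ^ j * appellSeq a (r - j) y := by
  simp only [appellSeq, sum_range_choose_mul_eq_of_le _ (Nat.sub_le r _),
    add_pow_eq_sum_range_of_le x y (Nat.sub_le r _), sum_mul, mul_sum]
  rw [sum_comm]
  refine sum_congr rfl fun j _ => sum_congr rfl fun m _ => ?_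
  have h := congrArg (Nat.cast : ℕ → R) (Nat.choose_mul_choose_sub_comm r m j)
  push_cast at h
  rw [Nat.sub_right_comm r m j]
  calc _ = ((r.choose m : R) * ((r - m).choose j : R)) * (x ^ j * (y ^ (r - j - m) * a m)) := by
        ring
    _ = _ := by rw [h]; ring

end Appell

section Recurrence

variable {R : Type*} [CommRing R]

theorem sum_choose_mul_one_sub_ite_mul (a : ℕ → R) (r : ℕ) :
    ∑ m ∈ range (r + 1), (r.choose m : R) * (1 - if r = m then 1 else 0) * a m =
      appellSeq a r 1 - a r := by
  have hlt : ∀ m ∈ range r,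
      (r.choose m : R) * (1 - if r = m then 1 else 0) * a m = r.choose m * (1 ^ (r - m) * a m) :=
    fun m hm => by rw [if_neg (by simp at hm; omega)]; ring
  rw [appellSeq, sum_range_succ, sum_range_succ, sum_congr rfl hlt]
  simp

variable {a : ℕ → R}

theorem appellSeq_two_add_appellSeq_one
    (ha : ∀ m, a m = -(if m = 0 then 1 else 0) -
      ∑ j ∈ range m, (m.choose j : R) * (2 ^ (m - j) + 1) * a j) (s : ℕ) :
    appellSeq a s 2 + appellSeq a s 1 = a s - if s = 0 then 1 else 0 := by
  have hsplit : ∑ j ∈ range s, (s.choose j : R) * (2 ^ (s - j) + 1) * a j =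
      ∑ j ∈ range s, (s.choose j : R) * (2 ^ (s - j) * a j) +
        ∑ j ∈ range s, (s.choose j : R) * (1 ^ (s - j) * a j) := by
    rw [← sum_add_distrib]
    exact sum_congr rfl fun j _ => by ring
  rw [appellSeq, appellSeq, sum_range_succ, sum_range_succ]
  simp only [Nat.choose_self, Nat.sub_self, pow_zero, Nat.cast_one]
  linear_combination ha s - hsplit

theorem appellSeq_add_two_add_appellSeq_add_one
    (ha : ∀ m, a m = -(if m = 0 then 1 else 0) -
      ∑ j ∈ range m, (m.choose j : R) * (2 ^ (m - j) + 1) * a j) (r : ℕ) (x : R) :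
    appellSeq a r (x + 2) + appellSeq a r (x + 1) = appellSeq a r x - x ^ r := by
  have hterm : ∀ j ∈ range (r + 1),
      (r.choose j : R) * x ^ j * appellSeq a (r - j) 2 +
        (r.choose j : R) * x ^ j * appellSeq a (r - j) 1 =
      (r.choose j : R) * x ^ j * a (r - j) - if j = r then x ^ r else 0 := by
    intro j hj
    rw [← mul_add, appellSeq_two_add_appellSeq_one ha, mul_sub]
    rcases eq_or_ne j r with rfl | hjr
    · simp
    · rw [if_neg (by simp at hj; omega), if_neg hjr, mul_zero]
  rw [appellSeq_add, appellSeq_add, appellSeq_eq_sum_pow_mul_sub a r x, ← sum_add_distrib,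
    sum_congr rfl hterm, sum_sub_distrib, sum_ite_eq' _ r, if_pos (self_mem_range_succ r)]

end Recurrence

theorem unweighted_sum_formula (G : ℕ → ℂ) (hG : ∀ i, G (i + 2) = G (i + 1) + G i)
    (A : ℕ → ℚ)
    (hA : ∀ m, A m = -(if m = 0 then 1 else 0) -
      ∑ j ∈ Finset.range m, (m.choose j : ℚ) * (2 ^ (m - j) + 1) * A j)
    (k r : ℕ) :
    ∑ j ∈ Finset.range (k + 1), (j : ℂ) ^ r * G j =
      -G 0 * ∑ m ∈ Finset.range (r + 1),
          (r.choose m : ℂ) * (1 - if r = m then 1 else 0) * (A m : ℂ)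
      + G 1 * ∑ m ∈ Finset.range (r + 1), (r.choose m : ℂ) * (A m : ℂ)
      - G k * ∑ m ∈ Finset.range (r + 1),
          (r.choose m : ℂ) * ((k : ℂ) + 2) ^ m * (A (r - m) : ℂ)
      - G (k + 1) * ∑ m ∈ Finset.range (r + 1),
          (r.choose m : ℂ) * ((k : ℂ) + 1) ^ m * (A (r - m) : ℂ) := by
  have ha : ∀ m, (A m : ℂ) = -(if m = 0 then 1 else 0) -
      ∑ j ∈ range m, (m.choose j : ℂ) * (2 ^ (m - j) + 1) * A j := fun m => by
    rw [hA m]; push_cast; simp [apply_ite]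
  have hp (i : ℕ) :
      appellSeq (A · : ℕ → ℂ) r ((i + 2 : ℕ) : ℂ) + appellSeq (A · : ℕ → ℂ) r ((i + 1 : ℕ) : ℂ) =
        appellSeq (A · : ℕ → ℂ) r (i : ℂ) - (i : ℂ) ^ r := by
    push_cast
    exact appellSeq_add_two_add_appellSeq_add_one ha r i
  rw [sum_range_succ_mul_eq_of_fib_rec (p := fun i => appellSeq (A · : ℕ → ℂ) r i) hG hp k,
    sum_choose_mul_one_sub_ite_mul, ← appellSeq_one,
    ← appellSeq_eq_sum_pow_mul_sub (A · : ℕ → ℂ), ← appellSeq_eq_sum_pow_mul_sub (A · : ℕ → ℂ)]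
  push_cast
  linear_combination G 0 * (appellSeq_two_add_appellSeq_one ha r + zero_pow_eq (M₀ := ℂ) r)
end

section
/- Let G : ℕ → ℂ satisfy G(i+2) = G(i+1) + G(i) for all i ≥ 0, and define Ā : ℕ → ℚ recursively by Ā(0) = 1 and Ā(p) = ∑_{j=0}^{p−1} C(p, j)·(2^{p−j} − 1)·Ā(j) for p ≥ 1. Then for all nonnegative integers k and r, ∑_{j=0}^{k} (−1)^j · j^r · G(j) = G(0) · ∑_{m=0}^{r} C(r, m)·(δ_{r,m} + 1)·Ā(m) − G(1) · ∑_{m=0}^{r} C(r, m)·Ā(m) − (−1)^k·G(k) · ∑_{m=0}^{r} C(r, m)·(k+2)^m·Ā(r−m) + (−1)^k·G(k+1) · ∑_{m=0}^{r} C(r, m)·(k+1)^m·Ā(r−m), with the convention 0⁰ = 1. -/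
/-!
Write `B_r(x) = ∑ C(r, m) x^m Ā(r - m)` (`appell Ā r x`) for the Appell polynomials of `Ā`,
whose exponential generating function is `e^{xt} A(t)` with `A(t) = ∑ Ā(n) tⁿ / n!`.
The recurrence for `Ā` says `A(t) (1 + e^t - e^{2t}) = 1`, i.e. `B_r(2) = B_r(1) + B_r(0) - 0^r`,
and the addition formula `B_r(x + c) = ∑ C(r, s) x^s B_{r-s}(c)` turns this
into `B_r(x + 2) = B_r(x + 1) + B_r(x) - x^r`.
Together with `G(k + 2) = G(k + 1) + G(k)` this makes the right-hand side grow by exactly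
`(-1)^(k+1) (k + 1)^r G(k + 1)` from `k` to `k + 1`, so the formula follows by induction on `k`.
-/

open Finset

section Appell

variable {R : Type*} [CommRing R]

def appell (a : ℕ → R) (r : ℕ) (x : R) : R :=
  ∑ m ∈ range (r + 1), (r.choose m : R) * x ^ m * a (r - m)

theorem appell_at_zero (a : ℕ → R) (r : ℕ) : appell a r 0 = a r := by
  simp [appell, sum_range_succ']

theorem appell_eq_sum_reflect (a : ℕ → R) (r : ℕ) (x : R) :
    appell a r x = ∑ m ∈ range (r + 1), (r.choose m : R) * x ^ (r - m) * a m := by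
  rw [appell, ← sum_range_reflect]
  refine sum_congr rfl fun m hm => ?_
  have hmr : m ≤ r := Nat.lt_succ_iff.mp (mem_range.mp hm)
  rw [add_tsub_cancel_right, Nat.choose_symm hmr, Nat.sub_sub_self hmr]

theorem appell_add (a : ℕ → R) (r : ℕ) (x c : R) :
    appell a r (x + c) =
      ∑ s ∈ range (r + 1), (r.choose s : R) * x ^ s * appell a (r - s) c := by
  simp only [appell, add_pow, mul_sum, sum_mul, range_eq_Ico]
  rw [← sum_Ico_Ico_comm]
  refine sum_congr rfl fun s hs => ?_
  have hsr : s ≤ r := Nat.lt_succ_iff.mp (mem_Ico.mp hs).2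
  rw [sum_Ico_eq_sum_range, ← range_eq_Ico, Nat.sub_add_comm hsr]
  refine sum_congr rfl fun t _ => ?_
  have hchoose : (r.choose (s + t) : R) * ((s + t).choose s : R)
      = (r.choose s : R) * ((r - s).choose t : R) := by
    have h := Nat.choose_mul (n := r) (Nat.le_add_right s t)
    rw [Nat.add_sub_cancel_left] at h
    exact_mod_cast congrArg (Nat.cast (R := R)) h
  rw [Nat.add_sub_cancel_left, Nat.sub_add_eq]
  linear_combination x ^ s * c ^ t * a (r - s - t) * hchoose

theorem appell_at_two {a : ℕ → R} (ha0 : a 0 = 1)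
    (ha : ∀ p, 1 ≤ p → a p = ∑ j ∈ range p, (p.choose j : R) * (2 ^ (p - j) - 1) * a j)
    (n : ℕ) : appell a n 2 = appell a n 1 + appell a n 0 - 0 ^ n := by
  rcases n with _ | n
  · simp [appell, ha0]
  rw [appell_at_zero, ha (n + 1) n.succ_pos, appell_eq_sum_reflect, appell_eq_sum_reflect,
    zero_pow n.succ_ne_zero, sub_zero, ← sub_eq_iff_eq_add', ← sum_sub_distrib, sum_range_succ]
  simp [mul_sub, sub_mul]

theorem appell_add_two {a : ℕ → R} (ha0 : a 0 = 1)
    (ha : ∀ p, 1 ≤ p → a p = ∑ j ∈ range p, (p.choose j : R) * (2 ^ (p - j) - 1) * a j)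
    (r : ℕ) (x : R) :
    appell a r (x + 2) = appell a r (x + 1) + appell a r x - x ^ r := by
  have hx := appell_add a r x 0
  rw [add_zero] at hx
  have hpow : x ^ r = ∑ s ∈ range (r + 1), (r.choose s : R) * x ^ s * 0 ^ (r - s) :=
    calc x ^ r = (x + 0) ^ r := by rw [add_zero]
      _ = _ := by rw [add_pow]; exact sum_congr rfl fun s _ => by ring
  rw [appell_add, appell_add, hx, hpow]
  simp only [appell_at_two ha0 ha, mul_add, mul_sub, sum_add_distrib, sum_sub_distrib]

theorem sum_range_alternating_pow_mul_eq_appell {G a : ℕ → R}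
    (hG : ∀ i, G (i + 2) = G (i + 1) + G i) (ha0 : a 0 = 1)
    (ha : ∀ p, 1 ≤ p → a p = ∑ j ∈ range p, (p.choose j : R) * (2 ^ (p - j) - 1) * a j)
    (k r : ℕ) :
    ∑ j ∈ range (k + 1), (-1) ^ j * (j : R) ^ r * G j =
      G 0 * (a r + appell a r 1) - G 1 * appell a r 1
        - (-1) ^ k * G k * appell a r (k + 2) + (-1) ^ k * G (k + 1) * appell a r (k + 1) := by
  induction k with
  | zero =>
    have h := appell_at_two ha0 ha r
    rw [appell_at_zero] at h
    simp only [sum_range_one, Nat.cast_zero, zero_add, pow_zero, one_mul]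
    linear_combination G 0 * h
  | succ k ih =>
    have h := appell_add_two ha0 ha r ((k : R) + 1)
    rw [sum_range_succ, ih, hG k]
    push_cast
    rw [add_assoc (k : R) 1 1, one_add_one_eq_two] at h ⊢
    linear_combination -(-1) ^ k * G (k + 1) * h

end Appell

theorem alternating_sum_formula (G : ℕ → ℂ) (hG : ∀ i, G (i + 2) = G (i + 1) + G i)
    (Abar : ℕ → ℚ) (hAbar0 : Abar 0 = 1)
    (hAbar : ∀ p, 1 ≤ p → Abar p =
      ∑ j ∈ Finset.range p, (p.choose j : ℚ) * (2 ^ (p - j) - 1) * Abar j)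
    (k r : ℕ) :
    ∑ j ∈ Finset.range (k + 1), (-1 : ℂ) ^ j * (j : ℂ) ^ r * G j =
      G 0 * ∑ m ∈ Finset.range (r + 1),
          (r.choose m : ℂ) * ((if r = m then 1 else 0) + 1) * (Abar m : ℂ)
      - G 1 * ∑ m ∈ Finset.range (r + 1), (r.choose m : ℂ) * (Abar m : ℂ)
      - (-1 : ℂ) ^ k * G k * ∑ m ∈ Finset.range (r + 1),
          (r.choose m : ℂ) * ((k : ℂ) + 2) ^ m * (Abar (r - m) : ℂ)
      + (-1 : ℂ) ^ k * G (k + 1) * ∑ m ∈ Finset.range (r + 1),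
          (r.choose m : ℂ) * ((k : ℂ) + 1) ^ m * (Abar (r - m) : ℂ) := by
  set a : ℕ → ℂ := fun m => (Abar m : ℂ)
  have ha0 : a 0 = 1 := by simp [a, hAbar0]
  have ha (p : ℕ) (hp : 1 ≤ p) :
      a p = ∑ j ∈ range p, (p.choose j : ℂ) * (2 ^ (p - j) - 1) * a j := by
    simp [a, hAbar p hp]
  have happell_one : appell a r 1 = ∑ m ∈ range (r + 1), (r.choose m : ℂ) * a m := by
    simp [appell_eq_sum_reflect]
  have hdelta : ∑ m ∈ range (r + 1), (r.choose m : ℂ) * ((if r = m then 1 else 0) + 1) * a m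
      = a r + appell a r 1 := by
    simp [happell_one, mul_add, add_mul, sum_add_distrib]
  rw [hdelta, ← happell_one]
  exact sum_range_alternating_pow_mul_eq_appell hG ha0 ha k r
end

section
/- Let G : ℕ → ℂ satisfy G(i+2) = G(i+1) + G(i) for all i ≥ 0, let n and k be nonnegative integers, and let w ∈ ℂ be such that Δ := ∑_{s=0}^{n+1} fib-binom(n+1, s) · (−1)^{⌈(n−s+1)/2⌉} · w^{n−s+1} ≠ 0. Then ∑_{j=0}^{k} w^j · G(j)^n = ( ∑_{s=0}^{n+1} fib-binom(n+1, s)·(−1)^{⌈(n−s+1)/2⌉} · ∑_{j=0}^{s−1} w^{j+n−s+1}·G(j)^n − ∑_{s=0}^{n+1} fib-binom(n+1, s)·(−1)^{⌈(n−s+1)/2⌉} · ∑_{j=k+1}^{k+s} w^{j+n−s+1}·G(j)^n ) / Δ. -/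
/-- The Fibonomial coefficient `fib-binom(p, q) = ∏_{j=1}^{q} F(p-q+j) / F(j)`. -/
noncomputable def fibBinom (p q : ℕ) : ℂ :=
  ∏ j ∈ Finset.Icc 1 q, (Nat.fib (p - q + j) : ℂ) / (Nat.fib j : ℂ)

/-!
By Binet's formula `G j = A φ ^ j + B ψ ^ j`, so `G j ^ n` is a linear combination of the
geometric sequences `(φ ^ i ψ ^ (n - i)) ^ j`, `i ≤ n`. The fibonomial theorem (the Pascal rule
for fibonomials, which comes from `F (m + k) = φ ^ k F m + ψ ^ m F k`) says that the signed
fibonomials `c_s` are the coefficients of `∏_{i ≤ n} (x - φ ^ i ψ ^ (n - i))`, so they annihilate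
`G ^ n`: `∑_s c_s G (m + s) ^ n = 0` for every `m`. Multiplying the weighted sum by
`Δ = ∑_s c_s w ^ (n + 1 - s)` and shifting indices, this recurrence cancels everything but the
boundary terms.
-/

open Finset Real
open scoped goldenRatio

theorem sum_range_add_sum_shift {M : Type*} [AddCommMonoid M] (f : ℕ → M) (s k : ℕ) :
    ∑ j ∈ range s, f j + ∑ i ∈ range (k + 1), f (s + i) =
      ∑ j ∈ range (k + 1), f j + ∑ j ∈ Icc (k + 1) (k + s), f j := by
  rw [← sum_range_add, ← Ico_add_one_right_eq_Icc, sum_range_add_sum_Ico _ (by omega),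
    show k + s + 1 = s + (k + 1) by omega]

theorem sum_pow_mul_mul_eq_of_annihilated {R : Type*} [CommRing R] (u c : ℕ → R) (d k : ℕ)
    (w : R) (hu : ∀ m, ∑ s ∈ range (d + 1), c s * u (m + s) = 0) :
    (∑ j ∈ range (k + 1), w ^ j * u j) * ∑ s ∈ range (d + 1), c s * w ^ (d - s) =
      (∑ s ∈ range (d + 1), c s * ∑ j ∈ range s, w ^ (j + (d - s)) * u j) -
        ∑ s ∈ range (d + 1), c s * ∑ j ∈ Icc (k + 1) (k + s), w ^ (j + (d - s)) * u j := by
  have hshift : ∀ s ∈ range (d + 1),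
      c s * ∑ j ∈ range (k + 1), w ^ (j + (d - s)) * u j =
        c s * ∑ j ∈ range s, w ^ (j + (d - s)) * u j -
          c s * ∑ j ∈ Icc (k + 1) (k + s), w ^ (j + (d - s)) * u j +
            ∑ i ∈ range (k + 1), w ^ (i + d) * (c s * u (i + s)) := by
    intro s hs
    have hexp : ∀ i, w ^ (s + i + (d - s)) * u (s + i) = w ^ (i + d) * u (i + s) := fun i => by
      rw [add_comm s i, show i + s + (d - s) = i + d by grind]
    have h := sum_range_add_sum_shift (fun j => w ^ (j + (d - s)) * u j) s k
    simp only [hexp] at h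
    have hc : ∑ i ∈ range (k + 1), w ^ (i + d) * (c s * u (i + s)) =
        c s * ∑ i ∈ range (k + 1), w ^ (i + d) * u (i + s) := by
      rw [mul_sum]; exact sum_congr rfl fun _ _ => by ring
    linear_combination (-c s) * h - hc
  calc (∑ j ∈ range (k + 1), w ^ j * u j) * ∑ s ∈ range (d + 1), c s * w ^ (d - s)
      = ∑ s ∈ range (d + 1), c s * ∑ j ∈ range (k + 1), w ^ (j + (d - s)) * u j := by
        rw [mul_sum]
        refine sum_congr rfl fun s _ => ?_
        rw [sum_mul, mul_sum]
        exact sum_congr rfl fun j _ => by ring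
    _ = (∑ s ∈ range (d + 1), c s * ∑ j ∈ range s, w ^ (j + (d - s)) * u j) -
          (∑ s ∈ range (d + 1), c s * ∑ j ∈ Icc (k + 1) (k + s), w ^ (j + (d - s)) * u j) +
          ∑ i ∈ range (k + 1), w ^ (i + d) * ∑ s ∈ range (d + 1), c s * u (i + s) := by
        rw [sum_congr rfl hshift, sum_add_distrib, sum_sub_distrib, sum_comm]
        simp only [mul_sum]
    _ = _ := by simp only [hu, mul_zero, sum_const_zero, add_zero]

theorem coe_fib_add_eq (m k : ℕ) :
    (Nat.fib (m + k) : ℂ) = (φ : ℂ) ^ k * Nat.fib m + (ψ : ℂ) ^ m * Nat.fib k := by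
  have h : (Nat.fib (m + k) : ℝ) = φ ^ k * Nat.fib m + ψ ^ m * Nat.fib k := by
    simp only [coe_fib_eq]
    field_simp
    ring
  exact_mod_cast h

theorem coe_fib_ne_zero {m : ℕ} (hm : m ≠ 0) : (Nat.fib m : ℂ) ≠ 0 := by
  simpa [Nat.fib_eq_zero] using hm

theorem fibBinom_zero (p : ℕ) : fibBinom p 0 = 1 := by
  simp [fibBinom]

theorem fibBinom_self (p : ℕ) : fibBinom p p = 1 :=
  prod_eq_one fun j hj => by
    rw [Nat.sub_self, zero_add, div_self (coe_fib_ne_zero (by grind))]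

theorem fibBinom_eq_div (p q : ℕ) :
    fibBinom p q =
      (∏ i ∈ range q, (Nat.fib (p - q + (i + 1)) : ℂ)) /
        ∏ i ∈ range q, (Nat.fib (i + 1) : ℂ) := by
  rw [fibBinom, ← Ico_add_one_right_eq_Icc, prod_Ico_eq_prod_range, Nat.add_sub_cancel,
    prod_div_distrib]
  simp only [add_comm 1]

theorem fibBinom_succ_succ_mul {p s : ℕ} (hs : s ≤ p) :
    fibBinom (p + 1) (s + 1) * Nat.fib (s + 1) = fibBinom p s * Nat.fib (p + 1) := by
  rw [fibBinom, prod_Icc_succ_top (by omega), Nat.add_sub_add_right,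
    show p - s + (s + 1) = p + 1 by omega, mul_assoc,
    div_mul_cancel₀ _ (coe_fib_ne_zero (by omega))]
  rfl

theorem fibBinom_succ_mul {p s : ℕ} (hs : s < p) :
    fibBinom p (s + 1) * Nat.fib (s + 1) = fibBinom p s * Nat.fib (p - s) := by
  rw [fibBinom_eq_div, fibBinom_eq_div, prod_range_succ', prod_range_succ,
    div_mul_eq_mul_div, mul_div_mul_right _ _ (coe_fib_ne_zero (Nat.succ_ne_zero s)),
    div_mul_eq_mul_div]
  congr 1
  rw [show p - (s + 1) + (0 + 1) = p - s by omega]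
  congr 1
  exact prod_congr rfl fun i _ => by
    rw [show p - (s + 1) + (i + 1 + 1) = p - s + (i + 1) by omega]

theorem fibBinom_succ_succ {p s : ℕ} (hs : s < p) :
    fibBinom (p + 1) (s + 1) =
      (φ : ℂ) ^ (s + 1) * fibBinom p (s + 1) + (ψ : ℂ) ^ (p - s) * fibBinom p s := by
  refine mul_right_cancel₀ (coe_fib_ne_zero (Nat.succ_ne_zero s)) ?_
  rw [fibBinom_succ_succ_mul hs.le, add_mul, mul_assoc, fibBinom_succ_mul hs,
    show p + 1 = p - s + (s + 1) by omega, coe_fib_add_eq]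
  ring

theorem neg_one_pow_add_two_div_two {R : Type*} [Monoid R] [HasDistribNeg R] (t : ℕ) :
    (-1 : R) ^ ((t + 2) / 2) = -(-1) ^ t * (-1) ^ ((t + 1) / 2) := by
  obtain ⟨m, rfl | rfl⟩ := Nat.even_or_odd' t
  · rw [show (2 * m + 2) / 2 = m + 1 by omega, show (2 * m + 1) / 2 = m by omega,
      (even_two_mul m).neg_one_pow, pow_succ]
    simp
  · rw [show (2 * m + 1 + 2) / 2 = m + 1 by omega, show (2 * m + 1 + 1) / 2 = m + 1 by omega,
      (odd_two_mul_add_one m).neg_one_pow]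
    simp

theorem goldenRatio_pow_mul_goldenConj_pow (t : ℕ) :
    (φ : ℂ) ^ t * (ψ : ℂ) ^ t = (-1) ^ t := by
  rw [← mul_pow, ← Complex.ofReal_mul, goldenRatio_mul_goldenConj]
  push_cast
  ring

noncomputable def signedFibBinom (p s : ℕ) : ℂ :=
  fibBinom p s * (-1) ^ ((p - s + 1) / 2)

theorem signedFibBinom_self (p : ℕ) : signedFibBinom p p = 1 := by
  simp [signedFibBinom, fibBinom_self]

theorem signedFibBinom_succ_zero (p : ℕ) :
    signedFibBinom (p + 1) 0 = -((φ : ℂ) ^ p * (ψ : ℂ) ^ p) * signedFibBinom p 0 := by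
  rw [signedFibBinom, signedFibBinom, fibBinom_zero, fibBinom_zero, Nat.sub_zero, Nat.sub_zero,
    goldenRatio_pow_mul_goldenConj_pow, neg_one_pow_add_two_div_two]
  ring

theorem signedFibBinom_succ_succ {p s : ℕ} (hs : s < p) :
    signedFibBinom (p + 1) (s + 1) =
      signedFibBinom p s * (ψ : ℂ) ^ (p - s) -
        (φ : ℂ) ^ p * (signedFibBinom p (s + 1) * (ψ : ℂ) ^ (p - (s + 1))) := by
  obtain ⟨t, rfl⟩ : ∃ t, p = s + 1 + t := ⟨p - (s + 1), by omega⟩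
  simp only [signedFibBinom, fibBinom_succ_succ hs, Nat.add_sub_add_right,
    Nat.add_sub_cancel_left, show s + 1 + t - s = t + 1 by omega, show t + 1 + 1 = t + 2 by rfl,
    neg_one_pow_add_two_div_two]
  linear_combination ((φ : ℂ) ^ (s + 1) * fibBinom (s + 1 + t) (s + 1) * (-1) ^ ((t + 1) / 2)) *
    goldenRatio_pow_mul_goldenConj_pow t

theorem sum_signedFibBinom_succ (p : ℕ) (x y : ℂ) :
    ∑ s ∈ range (p + 2), signedFibBinom (p + 1) s * x ^ s * y ^ (p + 1 - s) =
      (∑ s ∈ range (p + 1), signedFibBinom p s * x ^ s * ((ψ : ℂ) * y) ^ (p - s)) *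
        (x - (φ : ℂ) ^ p * y) := by
  have hmid : ∀ s ∈ range p,
      signedFibBinom (p + 1) (s + 1) * x ^ (s + 1) * y ^ (p + 1 - (s + 1)) =
        signedFibBinom p s * x ^ s * ((ψ : ℂ) * y) ^ (p - s) * x -
          signedFibBinom p (s + 1) * x ^ (s + 1) * ((ψ : ℂ) * y) ^ (p - (s + 1)) *
            ((φ : ℂ) ^ p * y) := by
    intro s hs
    obtain ⟨t, rfl⟩ : ∃ t, p = s + 1 + t := ⟨p - (s + 1), by grind⟩
    rw [signedFibBinom_succ_succ (by omega), Nat.add_sub_add_right,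
      show s + 1 + t - s = t + 1 by omega, Nat.add_sub_cancel_left]
    ring
  have hfirst : signedFibBinom (p + 1) 0 * x ^ 0 * y ^ (p + 1 - 0) =
      -(signedFibBinom p 0 * x ^ 0 * ((ψ : ℂ) * y) ^ (p - 0) * ((φ : ℂ) ^ p * y)) := by
    rw [signedFibBinom_succ_zero, Nat.sub_zero, Nat.sub_zero]
    ring
  have hlast : signedFibBinom (p + 1) (p + 1) * x ^ (p + 1) * y ^ (p + 1 - (p + 1)) =
      signedFibBinom p p * x ^ p * ((ψ : ℂ) * y) ^ (p - p) * x := by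
    simp [signedFibBinom_self, pow_succ]
  rw [sum_range_succ', sum_range_succ, sum_congr rfl hmid, hfirst, hlast, sum_sub_distrib,
    mul_sub, sum_mul, sum_mul, sum_range_succ, sum_range_succ']
  ring

theorem sum_signedFibBinom_mul_pow_mul_pow (p : ℕ) (x y : ℂ) :
    ∑ s ∈ range (p + 1), signedFibBinom p s * x ^ s * y ^ (p - s) =
      ∏ i ∈ range p, (x - (φ : ℂ) ^ i * (ψ : ℂ) ^ (p - 1 - i) * y) := by
  induction p generalizing y with
  | zero => simp [signedFibBinom_self]
  | succ p ih =>
    have hfactor : ∀ i ∈ range p, x - (φ : ℂ) ^ i * (ψ : ℂ) ^ (p + 1 - 1 - i) * y =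
        x - (φ : ℂ) ^ i * (ψ : ℂ) ^ (p - 1 - i) * ((ψ : ℂ) * y) := fun i hi => by
      rw [show p + 1 - 1 - i = p - 1 - i + 1 by grind, pow_succ]
      ring
    rw [sum_signedFibBinom_succ, ih, prod_range_succ, prod_congr rfl hfactor, Nat.add_sub_cancel,
      Nat.sub_self, pow_zero, mul_one]

theorem exists_eq_mul_goldenRatio_pow_add_mul_goldenConj_pow (G : ℕ → ℂ)
    (hG : ∀ i, G (i + 2) = G (i + 1) + G i) :
    ∃ A B : ℂ, ∀ i, G i = A * (φ : ℂ) ^ i + B * (ψ : ℂ) ^ i := by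
  have hφ : (φ : ℂ) ^ 2 = φ + 1 := by exact_mod_cast goldenRatio_sq
  have hψ : (ψ : ℂ) ^ 2 = ψ + 1 := by exact_mod_cast goldenConj_sq
  have hsub : (φ : ℂ) - ψ ≠ 0 := by
    rw [← Complex.ofReal_sub, goldenRatio_sub_goldenConj]
    exact_mod_cast (Real.sqrt_pos.mpr (by norm_num : (0 : ℝ) < 5)).ne'
  refine ⟨(G 1 - G 0 * ψ) / (φ - ψ), (G 0 * φ - G 1) / (φ - ψ), fun i => ?_⟩
  induction i using Nat.twoStepInduction with
  | zero => field_simp; ring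
  | one => field_simp; ring
  | more i h₀ h₁ =>
    rw [hG, h₀, h₁]
    linear_combination (-(G 1 - G 0 * ψ) / (φ - ψ) * (φ : ℂ) ^ i) * hφ -
      ((G 0 * φ - G 1) / (φ - ψ) * (ψ : ℂ) ^ i) * hψ

theorem sum_signedFibBinom_mul_pow_eq_zero (G : ℕ → ℂ)
    (hG : ∀ i, G (i + 2) = G (i + 1) + G i) (n m : ℕ) :
    ∑ s ∈ range (n + 2), signedFibBinom (n + 1) s * G (m + s) ^ n = 0 := by
  obtain ⟨A, B, hAB⟩ := exists_eq_mul_goldenRatio_pow_add_mul_goldenConj_pow G hG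
  have hroot : ∀ i ∈ range (n + 1), ∑ s ∈ range (n + 2),
      signedFibBinom (n + 1) s * ((φ : ℂ) ^ i * (ψ : ℂ) ^ (n - i)) ^ s = 0 := by
    intro i hi
    have h := sum_signedFibBinom_mul_pow_mul_pow (n + 1) ((φ : ℂ) ^ i * (ψ : ℂ) ^ (n - i)) 1
    simp only [one_pow, mul_one, Nat.add_sub_cancel] at h
    rw [h]
    exact prod_eq_zero hi (sub_self _)
  have hexpand : ∀ s, G (m + s) ^ n = ∑ i ∈ range (n + 1),
      (A * (φ : ℂ) ^ m) ^ i * (B * (ψ : ℂ) ^ m) ^ (n - i) * n.choose i *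
        ((φ : ℂ) ^ i * (ψ : ℂ) ^ (n - i)) ^ s := fun s => by
    rw [hAB, add_pow]
    exact sum_congr rfl fun i _ => by ring
  simp only [hexpand, mul_sum]
  rw [sum_comm]
  refine sum_eq_zero fun i hi => ?_
  simp only [mul_left_comm (signedFibBinom _ _)]
  rw [← mul_sum, hroot i hi, mul_zero]

theorem sum_w_pow_G_pow (G : ℕ → ℂ) (hG : ∀ i, G (i + 2) = G (i + 1) + G i)
    (n k : ℕ) (w : ℂ)
    (hΔ : ∑ s ∈ Finset.range (n + 2),
      fibBinom (n + 1) s * (-1 : ℂ) ^ ((n + 1 - s + 1) / 2) * w ^ (n + 1 - s) ≠ 0) :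
    ∑ j ∈ Finset.range (k + 1), w ^ j * G j ^ n =
      ((∑ s ∈ Finset.range (n + 2), fibBinom (n + 1) s * (-1 : ℂ) ^ ((n + 1 - s + 1) / 2) *
          ∑ j ∈ Finset.range s, w ^ (j + (n + 1 - s)) * G j ^ n)
        - ∑ s ∈ Finset.range (n + 2), fibBinom (n + 1) s * (-1 : ℂ) ^ ((n + 1 - s + 1) / 2) *
          ∑ j ∈ Finset.Icc (k + 1) (k + s), w ^ (j + (n + 1 - s)) * G j ^ n) /
      (∑ s ∈ Finset.range (n + 2),
        fibBinom (n + 1) s * (-1 : ℂ) ^ ((n + 1 - s + 1) / 2) * w ^ (n + 1 - s)) := by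
  rw [eq_div_iff hΔ]
  exact sum_pow_mul_mul_eq_of_annihilated (fun j => G j ^ n) (signedFibBinom (n + 1)) (n + 1) k
    w (sum_signedFibBinom_mul_pow_eq_zero G hG n)
end

section
/- Let G : ℕ → ℂ satisfy G(i+2) = G(i+1) + G(i) for all i ≥ 0. Then for every nonnegative integer k, ∑_{j=1}^{k} (−1)^{j−1} · G(2j−1) = −(1/5)·G(0) + (2/5)·G(1) + (−1)^k·(1/5)·G(2k) − (−1)^k·(2/5)·G(2k+1). -/
open Finset

theorem five_mul_sum_range_neg_one_pow_mul_odd {R : Type*} [CommRing R] {G : ℕ → R}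
    (hG : ∀ i, G (i + 2) = G (i + 1) + G i) (k : ℕ) :
    5 * ∑ j ∈ range k, (-1) ^ j * G (2 * j + 1) =
      2 * G 1 - G 0 + (-1) ^ k * (G (2 * k) - 2 * G (2 * k + 1)) := by
  induction k with
  | zero => simp
  | succ k ih =>
    have h₂ : G (2 * k + 2) = G (2 * k + 1) + G (2 * k) := hG (2 * k)
    have h₃ : G (2 * k + 3) = 2 * G (2 * k + 1) + G (2 * k) := by
      rw [hG (2 * k + 1), h₂]; ring
    rw [sum_range_succ, mul_add, ih, show 2 * (k + 1) = 2 * k + 2 by ring, h₂, h₃, pow_succ]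
    ring

theorem alternating_odd_index_sum (G : ℕ → ℂ) (hG : ∀ i, G (i + 2) = G (i + 1) + G i)
    (k : ℕ) :
    ∑ j ∈ Finset.Icc 1 k, (-1 : ℂ) ^ (j - 1) * G (2 * j - 1) =
      -(1 / 5) * G 0 + (2 / 5) * G 1 + (-1 : ℂ) ^ k * (1 / 5) * G (2 * k)
        - (-1 : ℂ) ^ k * (2 / 5) * G (2 * k + 1) := by
  have hreindex : ∑ j ∈ Icc 1 k, (-1 : ℂ) ^ (j - 1) * G (2 * j - 1) =
      ∑ j ∈ range k, (-1) ^ j * G (2 * j + 1) := by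
    rw [← Ico_add_one_right_eq_Icc, sum_Ico_eq_sum_range, Nat.add_sub_cancel]
    refine sum_congr rfl fun j _ => ?_
    rw [show 1 + j - 1 = j by omega, show 2 * (1 + j) - 1 = 2 * j + 1 by omega]
  rw [hreindex]
  linear_combination five_mul_sum_range_neg_one_pow_mul_odd hG k / 5
end

section
/- Let G : ℕ → ℂ satisfy G(i+2) = G(i+1) + G(i) for all i ≥ 0. Then for every nonnegative integer k, ∑_{j=0}^{k} 2^j · j · G(j) = (2/5)·G(1) + (2^{k+2}/5)·k·G(k) + (2^{k+1}/5)·(k − 1)·G(k+1). -/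
open Finset

theorem five_mul_sum_two_pow_mul_mul_of_fib_rec {R : Type*} [CommRing R] (G : ℕ → R)
    (hG : ∀ i, G (i + 2) = G (i + 1) + G i) (k : ℕ) :
    5 * ∑ j ∈ range (k + 1), (2 : R) ^ j * j * G j =
      2 * G 1 + 2 ^ (k + 2) * k * G k + 2 ^ (k + 1) * (k - 1) * G (k + 1) := by
  induction k with
  | zero => simp
  | succ n ih =>
    rw [sum_range_succ, mul_add, ih, hG n]
    push_cast
    ring

theorem two_pow_linear_sum (G : ℕ → ℂ) (hG : ∀ i, G (i + 2) = G (i + 1) + G i)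
    (k : ℕ) :
    ∑ j ∈ Finset.range (k + 1), (2 : ℂ) ^ j * (j : ℂ) * G j =
      (2 / 5) * G 1 + ((2 : ℂ) ^ (k + 2) / 5) * (k : ℂ) * G k
        + ((2 : ℂ) ^ (k + 1) / 5) * ((k : ℂ) - 1) * G (k + 1) := by
  have h := five_mul_sum_two_pow_mul_mul_of_fib_rec G hG k
  rw [← mul_right_inj' (by norm_num : (5 : ℂ) ≠ 0), h]
  ring
end

section
/- Let G : ℕ → ℂ satisfy G(i+2) = G(i+1) + G(i) for all i ≥ 0, and let w ∈ ℂ with w³ − 2w² − 2w + 1 ≠ 0. Then for every nonnegative integer k, ∑_{j=0}^{k} w^j · G(j)² = ( −(2w² + 2w − 1)·G(0)² − (2w² − w)·G(1)² + w²·G(2)² + (2w² + 2w − 1)·w^{k+1}·G(k+1)² + (2w − 1)·w^{k+2}·G(k+2)² − w^{k+3}·G(k+3)² ) / (w³ − 2w² − 2w + 1). -/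
/-!
The squares of a Fibonacci-type sequence satisfy the order-three recurrence
`a (n + 3) = 2 a (n + 2) + 2 a (n + 1) - a n`, whose characteristic polynomial
`x³ - 2x² - 2x + 1 = (x + 1)(x² - 3x + 1)` has roots `-1, φ², ψ²`. For any sequence obeying that
recurrence, `w ^ n * a n` times the characteristic polynomial at `w` is the increment of an explicit
potential built from three consecutive terms, so the weighted sum telescopes.
-/

variable {R : Type*} [CommRing R]

theorem sq_add_three_of_fib_rec {G : ℕ → R} (hG : ∀ i, G (i + 2) = G (i + 1) + G i) (n : ℕ) :
    G (n + 3) ^ 2 = 2 * G (n + 2) ^ 2 + 2 * G (n + 1) ^ 2 - G n ^ 2 := by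
  rw [show n + 3 = n + 1 + 2 from rfl, hG (n + 1), hG n]
  ring

section SquareRecurrence

variable (w : R) (a : ℕ → R)

def squareRecPotential (n : ℕ) : R :=
  (2 * w ^ 2 + 2 * w - 1) * w ^ n * a n + (2 * w - 1) * w ^ (n + 1) * a (n + 1)
    - w ^ (n + 2) * a (n + 2)

variable {a}

theorem squareRecPotential_succ_sub
    (ha : ∀ n, a (n + 3) = 2 * a (n + 2) + 2 * a (n + 1) - a n) (n : ℕ) :
    squareRecPotential w a (n + 1) - squareRecPotential w a n =
      (w ^ 3 - 2 * w ^ 2 - 2 * w + 1) * (w ^ n * a n) := by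
  simp only [squareRecPotential, ha n]
  ring

theorem mul_sum_eq_squareRecPotential_sub
    (ha : ∀ n, a (n + 3) = 2 * a (n + 2) + 2 * a (n + 1) - a n) (k : ℕ) :
    (w ^ 3 - 2 * w ^ 2 - 2 * w + 1) * ∑ j ∈ Finset.range k, w ^ j * a j =
      squareRecPotential w a k - squareRecPotential w a 0 := by
  rw [Finset.mul_sum, ← Finset.sum_range_sub]
  exact Finset.sum_congr rfl fun n _ => (squareRecPotential_succ_sub w ha n).symm

end SquareRecurrence

theorem weighted_square_sum (G : ℕ → ℂ) (hG : ∀ i, G (i + 2) = G (i + 1) + G i)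
    (w : ℂ) (hw : w ^ 3 - 2 * w ^ 2 - 2 * w + 1 ≠ 0) (k : ℕ) :
    ∑ j ∈ Finset.range (k + 1), w ^ j * G j ^ 2 =
      (-(2 * w ^ 2 + 2 * w - 1) * G 0 ^ 2 - (2 * w ^ 2 - w) * G 1 ^ 2 + w ^ 2 * G 2 ^ 2
        + (2 * w ^ 2 + 2 * w - 1) * w ^ (k + 1) * G (k + 1) ^ 2
        + (2 * w - 1) * w ^ (k + 2) * G (k + 2) ^ 2
        - w ^ (k + 3) * G (k + 3) ^ 2) / (w ^ 3 - 2 * w ^ 2 - 2 * w + 1) := by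
  rw [eq_div_iff hw, mul_comm,
    mul_sum_eq_squareRecPotential_sub w (sq_add_three_of_fib_rec hG) (k + 1)]
  simp only [squareRecPotential]
  ring
end

section
/- Let G : ℕ → ℂ satisfy G(i+2) = G(i+1) + G(i) for all i ≥ 0, and let w ∈ ℂ with w⁴ + 3w³ − 6w² − 3w + 1 ≠ 0. Then for every nonnegative integer k, ∑_{j=0}^{k} w^j · G(j)³ = ( (3w³ − 6w² − 3w + 1)·G(0)³ − (6w³ + 3w² − w)·G(1)³ − (3w³ − w²)·G(2)³ + w³·G(3)³ − (3w³ − 6w² − 3w + 1)·w^{k+1}·G(k+1)³ + (6w² + 3w − 1)·w^{k+2}·G(k+2)³ + (3w − 1)·w^{k+3}·G(k+3)³ − w^{k+4}·G(k+4)³ ) / (w⁴ + 3w³ − 6w² − 3w + 1). -/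
/-!
The cubes of a Fibonacci-like sequence satisfy the order-four recurrence with characteristic
polynomial `x⁴ - 3x³ - 6x² + 3x + 1`, whose roots are `φ³, ψ³, -φ, -ψ`. For any sequence `a` with
this recurrence the weighted sum `∑ wʲ a j` telescopes: an explicit combination `T n` of
`wⁿ a n, …, wⁿ⁺³ a (n+3)` satisfies `T n - T (n+1) = D wⁿ a n`, where `D = w⁴ p(1/w)` is the
denominator of the formula.
-/

open Finset

section CommRing

variable {R : Type*} [CommRing R]

theorem cube_add_four_of_fib_rec {G : ℕ → R} (hG : ∀ i, G (i + 2) = G (i + 1) + G i) (n : ℕ) :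
    G (n + 4) ^ 3 = 3 * G (n + 3) ^ 3 + 6 * G (n + 2) ^ 3 - 3 * G (n + 1) ^ 3 - G n ^ 3 := by
  have h2 : G (n + 2) = G (n + 1) + G n := hG n
  have h3 : G (n + 3) = G (n + 2) + G (n + 1) := hG (n + 1)
  have h4 : G (n + 4) = G (n + 3) + G (n + 2) := hG (n + 2)
  rw [h4, h3, h2]
  ring

def weightedCubeTail (w : R) (a : ℕ → R) (n : ℕ) : R :=
  (3 * w ^ 3 - 6 * w ^ 2 - 3 * w + 1) * w ^ n * a n
    - (6 * w ^ 2 + 3 * w - 1) * w ^ (n + 1) * a (n + 1)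
    - (3 * w - 1) * w ^ (n + 2) * a (n + 2)
    + w ^ (n + 3) * a (n + 3)

theorem weightedCubeTail_sub_succ {a : ℕ → R}
    (ha : ∀ n, a (n + 4) = 3 * a (n + 3) + 6 * a (n + 2) - 3 * a (n + 1) - a n) (w : R) (n : ℕ) :
    weightedCubeTail w a n - weightedCubeTail w a (n + 1) =
      (w ^ 4 + 3 * w ^ 3 - 6 * w ^ 2 - 3 * w + 1) * (w ^ n * a n) := by
  have h4 : a (n + 1 + 3) = 3 * a (n + 3) + 6 * a (n + 2) - 3 * a (n + 1) - a n := ha n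
  simp only [weightedCubeTail, h4]
  ring

end CommRing

theorem sum_range_pow_mul_eq_weightedCubeTail {K : Type*} [Field K] {a : ℕ → K}
    (ha : ∀ n, a (n + 4) = 3 * a (n + 3) + 6 * a (n + 2) - 3 * a (n + 1) - a n) {w : K}
    (hw : w ^ 4 + 3 * w ^ 3 - 6 * w ^ 2 - 3 * w + 1 ≠ 0) (n : ℕ) :
    ∑ j ∈ range n, w ^ j * a j =
      (weightedCubeTail w a 0 - weightedCubeTail w a n) /
        (w ^ 4 + 3 * w ^ 3 - 6 * w ^ 2 - 3 * w + 1) := by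
  rw [eq_div_iff hw, ← sum_range_sub', sum_mul]
  exact sum_congr rfl fun j _ => by rw [weightedCubeTail_sub_succ ha, mul_comm]

theorem weighted_cube_sum (G : ℕ → ℂ) (hG : ∀ i, G (i + 2) = G (i + 1) + G i)
    (w : ℂ) (hw : w ^ 4 + 3 * w ^ 3 - 6 * w ^ 2 - 3 * w + 1 ≠ 0) (k : ℕ) :
    ∑ j ∈ Finset.range (k + 1), w ^ j * G j ^ 3 =
      ((3 * w ^ 3 - 6 * w ^ 2 - 3 * w + 1) * G 0 ^ 3
        - (6 * w ^ 3 + 3 * w ^ 2 - w) * G 1 ^ 3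
        - (3 * w ^ 3 - w ^ 2) * G 2 ^ 3
        + w ^ 3 * G 3 ^ 3
        - (3 * w ^ 3 - 6 * w ^ 2 - 3 * w + 1) * w ^ (k + 1) * G (k + 1) ^ 3
        + (6 * w ^ 2 + 3 * w - 1) * w ^ (k + 2) * G (k + 2) ^ 3
        + (3 * w - 1) * w ^ (k + 3) * G (k + 3) ^ 3
        - w ^ (k + 4) * G (k + 4) ^ 3) / (w ^ 4 + 3 * w ^ 3 - 6 * w ^ 2 - 3 * w + 1) := by
  rw [sum_range_pow_mul_eq_weightedCubeTail (a := fun j => G j ^ 3)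
    (cube_add_four_of_fib_rec hG) hw]
  congr 1
  simp only [weightedCubeTail, add_assoc]
  ring
end

section
/- Let G : ℕ → ℂ satisfy G(i+2) = G(i+1) + G(i) for all i ≥ 0. Then the series ∑_{j=0}^{∞} G(j)² / 2^{4j} converges and ∑_{j=0}^{∞} G(j)² / 16^j = (3552/3553)·G(0)² + (224/3553)·G(1)² + (16/3553)·G(2)². -/
/-!
The squares `x n = G n ^ 2` satisfy `x (n + 3) = 2 x (n + 2) + 2 x (n + 1) - x n`: this is the
parallelogram law for `G (n + 3) = G (n + 2) + G (n + 1)` and `G n = G (n + 2) - G (n + 1)`.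
Since `‖G n‖` grows at most like `2 ^ n`, the series `∑ x n t ^ n` converges for `‖t‖ < 1 / 4`, and
shifting the series by one, two and three places turns the recurrence into a linear equation for
its sum, `(1 - 2t - 2t² + t³) S = (1 - 2t - 2t²) x 0 + t (1 - 2t) x 1 + t² x 2`;
at `t = 1 / 16` the coefficient of `S` is `3553 / 4096`.
-/

open Finset

theorem HasSum.one_sub_mul_eq_of_recurrence {R : Type*} [CommRing R] [TopologicalSpace R]
    [IsTopologicalRing R] [T2Space R] {x : ℕ → R} {a b c t S : R}
    (hx : ∀ n, x (n + 3) = a * x (n + 2) + b * x (n + 1) + c * x n)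
    (hS : HasSum (fun n => x n * t ^ n) S) :
    (1 - a * t - b * t ^ 2 - c * t ^ 3) * S =
      x 0 + x 1 * t + x 2 * t ^ 2 - a * t * (x 0 + x 1 * t) - b * t ^ 2 * x 0 := by
  have h1 := (hasSum_nat_add_iff' 1).mpr hS
  have h2 := (hasSum_nat_add_iff' 2).mpr hS
  have h3 := (hasSum_nat_add_iff' 3).mpr hS
  have hshift : HasSum (fun n => x (n + 3) * t ^ (n + 3))
      (a * t * (S - ∑ i ∈ range 2, x i * t ^ i) + b * t ^ 2 * (S - ∑ i ∈ range 1, x i * t ^ i)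
        + c * t ^ 3 * S) := by
    refine (((h2.mul_left (a * t)).add (h1.mul_left (b * t ^ 2))).add
      (hS.mul_left (c * t ^ 3))).congr_fun fun n => ?_
    rw [hx]
    ring
  have h := h3.unique hshift
  simp only [sum_range_succ, sum_range_zero] at h
  linear_combination h

theorem norm_le_of_fibonacci_recurrence {E : Type*} [SeminormedAddCommGroup E] {G : ℕ → E}
    (hG : ∀ i, G (i + 2) = G (i + 1) + G i) (n : ℕ) :
    ‖G n‖ ≤ max ‖G 0‖ ‖G 1‖ * 2 ^ n := by
  set M := max ‖G 0‖ ‖G 1‖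
  have hM : 0 ≤ M := le_max_of_le_left (norm_nonneg _)
  induction n using Nat.twoStepInduction with
  | zero => simpa only [pow_zero, mul_one] using le_max_left ‖G 0‖ ‖G 1‖
  | one => linarith [le_max_right ‖G 0‖ ‖G 1‖]
  | more n ih ih' =>
    calc ‖G (n + 2)‖ ≤ ‖G (n + 1)‖ + ‖G n‖ := hG n ▸ norm_add_le _ _
      _ ≤ M * 2 ^ (n + 1) + M * 2 ^ n := add_le_add ih' ih
      _ ≤ M * 2 ^ (n + 2) := by
        have : 0 ≤ M * 2 ^ n := by positivity
        linear_combination this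

theorem sq_add_three_of_fibonacci_recurrence {R : Type*} [CommRing R] {G : ℕ → R}
    (hG : ∀ i, G (i + 2) = G (i + 1) + G i) (n : ℕ) :
    G (n + 3) ^ 2 = 2 * G (n + 2) ^ 2 + 2 * G (n + 1) ^ 2 - G n ^ 2 := by
  rw [hG (n + 1)]
  linear_combination (-(G n + G (n + 2) - G (n + 1))) * hG n

theorem summable_sq_mul_pow_of_fibonacci_recurrence {𝕜 : Type*} [NormedField 𝕜] [CompleteSpace 𝕜]
    {G : ℕ → 𝕜} (hG : ∀ i, G (i + 2) = G (i + 1) + G i) {t : 𝕜} (ht : ‖t‖ < 1 / 4) :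
    Summable (fun j => G j ^ 2 * t ^ j) := by
  set M := max ‖G 0‖ ‖G 1‖
  have hG_le := norm_le_of_fibonacci_recurrence hG
  refine Summable.of_norm_bounded ((summable_geometric_of_lt_one (by positivity)
    (by linarith : 4 * ‖t‖ < 1)).mul_left (M ^ 2)) fun j => ?_
  calc ‖G j ^ 2 * t ^ j‖ = ‖G j‖ ^ 2 * ‖t‖ ^ j := by rw [norm_mul, norm_pow, norm_pow]
    _ ≤ (M * 2 ^ j) ^ 2 * ‖t‖ ^ j := by gcongr; exact hG_le j
    _ = M ^ 2 * (4 * ‖t‖) ^ j := by rw [mul_pow, mul_pow, ← pow_mul, mul_comm j, pow_mul]; ring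

theorem square_sum_sixteenth (G : ℕ → ℂ) (hG : ∀ i, G (i + 2) = G (i + 1) + G i) :
    HasSum (fun j : ℕ => G j ^ 2 / 2 ^ (4 * j))
      ((3552 / 3553) * G 0 ^ 2 + (224 / 3553) * G 1 ^ 2 + (16 / 3553) * G 2 ^ 2) := by
  have hterm : (fun j : ℕ => G j ^ 2 / 2 ^ (4 * j)) = fun j => G j ^ 2 * (1 / 16 : ℂ) ^ j := by
    funext j
    rw [pow_mul, one_div_pow, div_eq_mul_one_div]
    norm_num
  obtain ⟨S, hS⟩ := summable_sq_mul_pow_of_fibonacci_recurrence hG (t := (1 / 16 : ℂ))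
    (by norm_num)
  have hS_eq := hS.one_sub_mul_eq_of_recurrence (a := 2) (b := 2) (c := -1) fun n => by
    rw [sq_add_three_of_fibonacci_recurrence hG]
    ring
  have hS_val : S = 3552 / 3553 * G 0 ^ 2 + 224 / 3553 * G 1 ^ 2 + 16 / 3553 * G 2 ^ 2 := by
    linear_combination (4096 / 3553 : ℂ) * hS_eq
  rw [hterm, ← hS_val]
  exact hS
end
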